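/- arXiv:0811.1701 — 8 statements merged into one kernel-verified Lean document; each statement's English description precedes it below -/
import Mathlib

section
/- Let X be a finite-dimensional real normed linear space, and let {A_n} be a sequence of sufficient enlargements for X that converges in the Hausdorff metric to a set A. Then A is a sufficient enlargement for X. -/
open Set Metric MeasureTheory Filter TopologicalSpace
open scoped Pointwise

noncomputable section

def IsBall {X : Type*} [NormedAddCommGroup X] [NormedSpace ℝ X] (A : Set X) : Prop :=
  A = -A ∧ Bornology.IsBounded A ∧ IsClosed A ∧ Convex ℝ A ∧ (interior A).Nonempty

def IsSE (X : Type) [NormedAddCommGroup X] [NormedSpace ℝ X] (A : Set X) : Prop :=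
  IsBall A ∧
    ∀ (Y : Type) [NormedAddCommGroup Y] [NormedSpace ℝ Y] [CompleteSpace Y]
      (J : X →ₗᵢ[ℝ] Y),
      ∃ P : Y →L[ℝ] X, (∀ x, P (J x) = x) ∧ P '' closedBall 0 1 ⊆ A

/-! The two halves of Hausdorff convergence say that every point of `A` is a limit of points of
`Aₙ`, and that every limit of points of `Aₙ` lies in `A`; this passes symmetry, convexity and
`B_X ⊆ Aₙ` on to `A`. For an embedding `J : X → Y`, the projections `Pₙ` with `Pₙ(B_Y) ⊆ Aₙ` are
eventually bounded in norm, so, `X` being finite-dimensional, Banach–Alaoglu gives a pointwise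
cluster point `P` along an ultrafilter. Pointwise limits preserve `P ∘ J = id`, and `P y` for
`y ∈ B_Y` is a limit of points `Pₙ y ∈ Aₙ`, hence lies in `A`. -/

open Topology

namespace TopologicalSpace.NonemptyCompacts

variable {α ι : Type*} [MetricSpace α] {l : Filter ι} {K : ι → NonemptyCompacts α}
  {L : NonemptyCompacts α}

theorem hausdorffEDist_ne_top (S T : NonemptyCompacts α) :
    hausdorffEDist (S : Set α) T ≠ ⊤ :=
  hausdorffEDist_ne_top_of_nonempty_of_bounded S.nonempty T.nonempty S.isCompact.isBounded
    T.isCompact.isBounded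

theorem mem_of_tendsto [l.NeBot] (hK : Tendsto K l (𝓝 L)) {x : ι → α} {p : α}
    (hx : Tendsto x l (𝓝 p)) (hxK : ∀ᶠ i in l, x i ∈ K i) : p ∈ L := by
  have hdist : Tendsto (fun i => hausdorffDist (K i : Set α) L) l (𝓝 0) :=
    tendsto_iff_dist_tendsto_zero.1 hK
  have hle : infDist p L ≤ 0 :=
    le_of_tendsto_of_tendsto ((continuous_infDist_pt _).tendsto p |>.comp hx) hdist <|
      hxK.mono fun i hi => infDist_le_hausdorffDist_of_mem hi (hausdorffEDist_ne_top _ _)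
  exact (L.isCompact.isClosed.mem_iff_infDist_zero L.nonempty).2 (hle.antisymm infDist_nonneg)

theorem exists_tendsto_of_mem (hK : Tendsto K l (𝓝 L)) {p : α} (hp : p ∈ L) :
    ∃ x : ι → α, (∀ i, x i ∈ K i) ∧ Tendsto x l (𝓝 p) := by
  choose x hxK hx using fun i => (K i).isCompact.exists_infDist_eq_dist (K i).nonempty p
  refine ⟨x, hxK, tendsto_iff_dist_tendsto_zero.2 ?_⟩
  refine squeeze_zero (fun _ => dist_nonneg) (fun i => ?_) (tendsto_iff_dist_tendsto_zero.1 hK)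
  rw [dist_comm (x i), ← hx, dist_comm]
  exact infDist_le_hausdorffDist_of_mem hp (hausdorffEDist_ne_top _ _)

theorem subset_of_tendsto [l.NeBot] (hK : Tendsto K l (𝓝 L)) {S : Set α}
    (hS : ∀ i, S ⊆ K i) : S ⊆ L :=
  fun _ hp => mem_of_tendsto hK tendsto_const_nhds (.of_forall fun i => hS i hp)

theorem eventually_subset_closedBall (hK : Tendsto K l (𝓝 L)) {c : α} {r ε : ℝ}
    (hL : (L : Set α) ⊆ closedBall c r) (hε : 0 < ε) :
    ∀ᶠ i in l, (K i : Set α) ⊆ closedBall c (r + ε) := by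
  filter_upwards [Metric.tendsto_nhds.1 hK ε hε] with i hi x hx
  obtain ⟨y, hy, hxy⟩ := exists_dist_lt_of_hausdorffDist_lt hx hi (hausdorffEDist_ne_top _ _)
  have hyc : dist y c ≤ r := hL hy
  exact mem_closedBall.2 (by linarith [dist_triangle x y c])

variable {E : Type*} [NormedAddCommGroup E] {K : ι → NonemptyCompacts E}
  {L : NonemptyCompacts E}

theorem neg_eq_of_tendsto [l.NeBot] (hK : Tendsto K l (𝓝 L))
    (hneg : ∀ i, (K i : Set E) = -K i) : (L : Set E) = -L := by
  have hsub : (L : Set E) ⊆ -L := fun p hp => by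
    obtain ⟨x, hxK, hx⟩ := exists_tendsto_of_mem hK hp
    refine mem_of_tendsto hK hx.neg (.of_forall fun i => ?_)
    show -x i ∈ (K i : Set E)
    rw [← Set.mem_neg, ← hneg i]
    exact hxK i
  exact hsub.antisymm (Set.neg_subset.2 hsub)

variable [NormedSpace ℝ E]

theorem convex_of_tendsto [l.NeBot] (hK : Tendsto K l (𝓝 L))
    (hconv : ∀ i, Convex ℝ (K i : Set E)) : Convex ℝ (L : Set E) := by
  intro p hp q hq a b ha hb hab
  obtain ⟨x, hxK, hx⟩ := exists_tendsto_of_mem hK hp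
  obtain ⟨y, hyK, hy⟩ := exists_tendsto_of_mem hK hq
  exact mem_of_tendsto hK ((hx.const_smul a).add (hy.const_smul b))
    (.of_forall fun i => hconv i (hxK i) (hyK i) ha hb hab)

theorem isBall_of_tendsto [l.NeBot] (hK : Tendsto K l (𝓝 L)) (hball : ∀ i, IsBall (K i : Set E))
    {S : Set E} (hS : (interior S).Nonempty) (hSK : ∀ i, S ⊆ K i) : IsBall (L : Set E) :=
  ⟨neg_eq_of_tendsto hK fun i => (hball i).1, L.isCompact.isBounded, L.isCompact.isClosed,
    convex_of_tendsto hK fun i => (hball i).2.2.2.1,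
    hS.mono (interior_mono (subset_of_tendsto hK hSK))⟩

end TopologicalSpace.NonemptyCompacts

theorem ContinuousLinearMap.opNorm_le_of_image_closedBall_subset {𝕜 E F : Type*}
    [NontriviallyNormedField 𝕜] [NormedAlgebra ℝ 𝕜] [SeminormedAddCommGroup E]
    [NormedSpace 𝕜 E] [SeminormedAddCommGroup F] [NormedSpace 𝕜 F] {f : E →L[𝕜] F} {C : ℝ}
    (hf : f '' closedBall 0 1 ⊆ closedBall 0 C) : ‖f‖ ≤ C := by
  have hC : 0 ≤ C := by simpa using hf ⟨0, mem_closedBall_self zero_le_one, map_zero f⟩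
  refine opNorm_le_of_unit_norm hC fun x hx => ?_
  simpa using hf ⟨x, by simp [hx], rfl⟩

theorem ContinuousLinearMap.exists_ultrafilter_tendsto_apply {𝕜 E F ι : Type*}
    [NontriviallyNormedField 𝕜] [NormedAddCommGroup E] [NormedSpace 𝕜 E]
    [NormedAddCommGroup F] [NormedSpace 𝕜 F] [ProperSpace F] {l : Filter ι} [l.NeBot]
    {f : ι → E →L[𝕜] F} {C : ℝ} (hf : ∀ᶠ i in l, ‖f i‖ ≤ C) :
    ∃ (U : Ultrafilter ι) (g : E →L[𝕜] F), ↑U ≤ l ∧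
      ∀ x, Tendsto (fun i => f i x) U (𝓝 (g x)) := by
  have hU : ↑(Ultrafilter.of l) ≤ l := Ultrafilter.of_le l
  obtain ⟨_, ⟨g, -, rfl⟩, hg⟩ :=
    (isCompact_image_coe_closedBall (0 : E →L[𝕜] F) C).ultrafilter_le_nhds
      ((Ultrafilter.of l).map fun i => ⇑(f i)) <| le_principal_iff.2 <| hU <|
        hf.mono fun i hi => ⟨f i, mem_closedBall_zero_iff.2 hi, rfl⟩
  exact ⟨_, g, hU, tendsto_pi_nhds.1 hg⟩

theorem IsSE.closedBall_subset {X : Type} [NormedAddCommGroup X] [NormedSpace ℝ X]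
    [CompleteSpace X] {A : Set X} (hA : IsSE X A) : closedBall 0 1 ⊆ A := by
  obtain ⟨P, hP, hPA⟩ := hA.2 X LinearIsometry.id
  exact fun x hx => hPA ⟨x, hx, hP x⟩

/-- The set of sufficient enlargements is closed with respect to the Hausdorff metric
(on nonempty compact subsets of `X`). -/
theorem stmt4 (X : Type) [NormedAddCommGroup X] [NormedSpace ℝ X] [FiniteDimensional ℝ X]
    (An : ℕ → NonemptyCompacts X) (A : NonemptyCompacts X)
    (hSE : ∀ n, IsSE X (An n : Set X))
    (hconv : Tendsto An atTop (nhds A)) :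
    IsSE X (A : Set X) := by
  have hint : (interior (closedBall (0 : X) 1)).Nonempty :=
    ⟨0, mem_interior_iff_mem_nhds.2 (closedBall_mem_nhds 0 one_pos)⟩
  refine ⟨NonemptyCompacts.isBall_of_tendsto hconv (fun n => (hSE n).1) hint
    fun n => (hSE n).closedBall_subset, fun Y _ _ _ J => ?_⟩
  choose P hPJ hPA using fun n => (hSE n).2 Y J
  obtain ⟨R, hR⟩ := A.isCompact.isBounded.subset_closedBall (0 : X)
  have hbound : ∀ᶠ n in atTop, ‖P n‖ ≤ R + 1 :=
    (NonemptyCompacts.eventually_subset_closedBall hconv hR one_pos).mono fun n hn =>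
      ContinuousLinearMap.opNorm_le_of_image_closedBall_subset ((hPA n).trans hn)
  obtain ⟨U, Q, hU, hQ⟩ := ContinuousLinearMap.exists_ultrafilter_tendsto_apply hbound
  refine ⟨Q, fun x => tendsto_nhds_unique (hQ (J x)) ?_, ?_⟩
  · simpa only [hPJ] using tendsto_const_nhds
  · rintro _ ⟨y, hy, rfl⟩
    exact NonemptyCompacts.mem_of_tendsto (hconv.mono_left hU) (hQ y)
      (.of_forall fun n => hPA n ⟨y, hy, rfl⟩)
end
end

section
/- Every finite-dimensional real normed linear space X possesses a minimal-volume sufficient enlargement: there exists a sufficient enlargement A for X such that vol A ≤ vol D for every sufficient enlargement D for X. -/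
/-!
The space `ℓ^∞(B_{X*})` is injective (Hahn–Banach coordinatewise), so a ball is a sufficient
enlargement as soon as it contains `P(B)` for one projection `P` from `ℓ^∞(B_{X*})` onto the
canonical copy of `X`, and every sufficient enlargement contains such a `P(B)`. It thus suffices to
minimise `vol (closure P(B))` over these projections. Along a minimising sequence the convex bodies
`closure P_n(B)` contain the unit ball and have bounded volume, hence are uniformly bounded; a
pointwise ultrafilter limit `Q` of the `P_n` exists, and by compactness
`closure Q(B) ⊆ (1 + ε) closure P_n(B)` for many `n`, so `closure Q(B)` has minimal volume.
-/

open Set Metric MeasureTheory Filter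
open scoped Pointwise

noncomputable section

def IsMVSE (X : Type) [NormedAddCommGroup X] [NormedSpace ℝ X]
    [MeasurableSpace X] [BorelSpace X] [FiniteDimensional ℝ X] (A : Set X) : Prop :=
  IsSE X A ∧ ∀ D : Set X, IsSE X D →
    (Module.finBasis ℝ X).addHaar A ≤ (Module.finBasis ℝ X).addHaar D

open scoped ENNReal lp Topology

section LpInfty

variable {E F : Type*} [NormedAddCommGroup E] [NormedSpace ℝ E]
  [NormedAddCommGroup F] [NormedSpace ℝ F]

def toLpInfty {ι : Type*} (g : ι → StrongDual ℝ E) (hg : ∀ i, ‖g i‖ ≤ 1) :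
    E →L[ℝ] ℓ^∞(ι, ℝ) :=
  have hbound (x : E) (i : ι) : ‖g i x‖ ≤ ‖x‖ := by simpa using (g i).le_of_opNorm_le (hg i) x
  LinearMap.mkContinuous
    { toFun := fun x => ⟨fun i => g i x, memℓp_infty ⟨‖x‖, by rintro _ ⟨i, rfl⟩; exact hbound x i⟩⟩
      map_add' := fun x y => lp.ext <| funext fun i => map_add (g i) x y
      map_smul' := fun c x => lp.ext <| funext fun i => map_smul (g i) c x }
    1 (fun x => by simpa using lp.norm_le_of_forall_le (norm_nonneg x) (hbound x))

@[simp]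
lemma toLpInfty_apply {ι : Type*} (g : ι → StrongDual ℝ E) (hg : ∀ i, ‖g i‖ ≤ 1) (x : E)
    (i : ι) : toLpInfty g hg x i = g i x :=
  rfl

lemma norm_toLpInfty_le {ι : Type*} (g : ι → StrongDual ℝ E) (hg : ∀ i, ‖g i‖ ≤ 1) :
    ‖toLpInfty g hg‖ ≤ 1 :=
  (toLpInfty g hg).opNorm_le_bound zero_le_one fun x => by
    simpa using lp.norm_le_of_forall_le (norm_nonneg x) fun i => by
      simpa using (g i).le_of_opNorm_le (hg i) x

variable (E) in
def lpInftyEmbedding : E →ₗᵢ[ℝ] ℓ^∞(closedBall (0 : StrongDual ℝ E) 1, ℝ) where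
  toLinearMap := (toLpInfty Subtype.val fun f => mem_closedBall_zero_iff.1 f.2).toLinearMap
  norm_map' x := by
    let T := toLpInfty Subtype.val fun f : closedBall (0 : StrongDual ℝ E) 1 =>
      mem_closedBall_zero_iff.1 f.2
    change ‖T x‖ = ‖x‖
    refine le_antisymm ((T.le_of_opNorm_le (norm_toLpInfty_le _ _) x).trans_eq (one_mul _)) ?_
    obtain ⟨f, hf, hfx⟩ := exists_dual_vector'' ℝ x
    calc ‖x‖ = ‖T x ⟨f, mem_closedBall_zero_iff.2 hf⟩‖ := by simp [T, hfx]
      _ ≤ ‖T x‖ := lp.norm_apply_le_norm ENNReal.top_ne_zero _ _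

lemma LinearIsometry.exists_extension_norm_eq (J : E →ₗᵢ[ℝ] F) (f : StrongDual ℝ E) :
    ∃ g : StrongDual ℝ F, g.comp J.toContinuousLinearMap = f ∧ ‖g‖ = ‖f‖ := by
  obtain ⟨g, hg, hgf⟩ := _root_.exists_extension_norm_eq (LinearMap.range J.toLinearMap)
    (f.comp J.equivRange.symm.toContinuousLinearEquiv.toContinuousLinearMap)
  refine ⟨g, ContinuousLinearMap.ext fun x => ?_, ?_⟩
  · simpa using hg (J.equivRange x)
  · rw [hgf]
    exact ContinuousLinearMap.opNorm_comp_linearIsometryEquiv f J.equivRange.symm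

lemma LinearIsometry.exists_extension_lpInfty {ι : Type*} (J : E →ₗᵢ[ℝ] F)
    (g : ι → StrongDual ℝ E) (hg : ∀ i, ‖g i‖ ≤ 1) :
    ∃ T : F →L[ℝ] ℓ^∞(ι, ℝ), T.comp J.toContinuousLinearMap = toLpInfty g hg ∧ ‖T‖ ≤ 1 := by
  choose h hhg hh using fun i => J.exists_extension_norm_eq (g i)
  refine ⟨toLpInfty h fun i => (hh i).trans_le (hg i), ?_, norm_toLpInfty_le _ _⟩
  ext x : 1
  exact lp.ext <| funext fun i => congr($(hhg i) x)

end LpInfty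

section Projection

variable {E F : Type*} [NormedAddCommGroup E] [NormedSpace ℝ E]
  [NormedAddCommGroup F] [NormedSpace ℝ F]

lemma closedBall_subset_closure_image_closedBall {P : E →L[ℝ] F} {J : F →ₗᵢ[ℝ] E}
    (hPJ : ∀ x, P (J x) = x) : closedBall (0 : F) 1 ⊆ closure (P '' closedBall 0 1) :=
  fun x hx => subset_closure ⟨J x, by simpa using hx, hPJ x⟩

lemma isBall_closure_image_closedBall {P : E →L[ℝ] F} {J : F →ₗᵢ[ℝ] E}
    (hPJ : ∀ x, P (J x) = x) : IsBall (closure (P '' closedBall 0 1)) := by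
  refine ⟨?_, (P.lipschitz.isBounded_image isBounded_closedBall).closure, isClosed_closure,
    ((convex_closedBall _ _).linear_image P.toLinearMap).closure, ?_⟩
  · rw [neg_closure]
    congr 1
    ext x
    simp only [mem_image, mem_closedBall_zero_iff, Set.mem_neg]
    exact ⟨fun ⟨w, hw, hwx⟩ => ⟨-w, by simpa using hw, by simp [hwx]⟩,
      fun ⟨w, hw, hwx⟩ => ⟨-w, by simpa using hw, by simp [hwx]⟩⟩
  · exact ⟨0, interior_mono (closedBall_subset_closure_image_closedBall hPJ)
      (ball_subset_interior_closedBall (mem_ball_self one_pos))⟩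

lemma LinearIsometry.exists_leftInverse [FiniteDimensional ℝ F] (J : F →ₗᵢ[ℝ] E) :
    ∃ P : E →L[ℝ] F, ∀ x, P (J x) = x := by
  obtain ⟨P, hP⟩ := (J.equivRange.symm.toContinuousLinearEquiv :
    LinearMap.range J.toLinearMap →L[ℝ] F).exist_extension_of_finiteDimensional_range
  exact ⟨P, fun x => by simpa using congr($hP.symm (J.equivRange x))⟩

end Projection

lemma isSE_of_lpInftyEmbedding {X : Type} [NormedAddCommGroup X] [NormedSpace ℝ X] {A : Set X}
    (hA : IsBall A) {P : ℓ^∞(closedBall (0 : StrongDual ℝ X) 1, ℝ) →L[ℝ] X}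
    (hPJ : ∀ x, P (lpInftyEmbedding X x) = x) (hPA : P '' closedBall 0 1 ⊆ A) : IsSE X A := by
  refine ⟨hA, fun Y _ _ _ J => ?_⟩
  obtain ⟨T, hTJ, hT⟩ := J.exists_extension_lpInfty Subtype.val
    fun f : closedBall (0 : StrongDual ℝ X) 1 => mem_closedBall_zero_iff.1 f.2
  refine ⟨P.comp T, fun x => ?_, ?_⟩
  · simpa using congr(P ($hTJ x)) ▸ hPJ x
  · rintro _ ⟨y, hy, rfl⟩
    refine hPA ⟨T y, ?_, rfl⟩
    simpa using (T.le_of_opNorm_le hT y).trans (by simpa using hy)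

section Volume

variable {E : Type*} [NormedAddCommGroup E] [NormedSpace ℝ E]

lemma Convex.ball_subset_of_closedBall_subset {K : Set E} (hK : Convex ℝ K)
    (hB : closedBall 0 1 ⊆ K) {x : E} (hx : x ∈ K) {t : ℝ} (ht : 0 ≤ t) :
    ball (t • x) (1 - t) ⊆ K := by
  intro z hz
  rw [mem_ball, dist_eq_norm] at hz
  have ht1 : 0 < 1 - t := (norm_nonneg _).trans_lt hz
  have hw : (1 - t)⁻¹ • (z - t • x) ∈ closedBall 0 1 := by
    rw [mem_closedBall_zero_iff, norm_smul, Real.norm_of_nonneg (inv_nonneg.2 ht1.le),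
      inv_mul_le_one₀ ht1]
    exact hz.le
  convert hK hx (hB hw) ht ht1.le (by ring) using 1
  rw [smul_smul, mul_inv_cancel₀ ht1.ne', one_smul, add_sub_cancel]

variable [MeasurableSpace E] [BorelSpace E] (μ : Measure E) [μ.IsAddHaarMeasure]

lemma nat_mul_measure_ball_le {K : Set E} (hK : Convex ℝ K) (hB : closedBall 0 1 ⊆ K)
    {x : E} (hx : x ∈ K) {N : ℕ} (hN : 2 * N ≤ ‖x‖) :
    N * μ (ball 0 (1 / 2)) ≤ μ K := by
  rcases N.eq_zero_or_pos with rfl | hN0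
  · simp
  have hx0 : 0 < ‖x‖ := lt_of_lt_of_le (by positivity) hN
  set c : ℕ → E := fun j => ((j : ℝ) / ‖x‖) • x
  have hsub (j : ℕ) (hj : j < N) : ball (c j) (1 / 2) ⊆ K := by
    refine (ball_subset_ball ?_).trans (hK.ball_subset_of_closedBall_subset hB hx (by positivity))
    have : (j : ℝ) ≤ N := by exact_mod_cast hj.le
    rw [le_sub_comm, div_le_iff₀ hx0]
    linarith
  have hdist (j k : ℕ) : dist (c j) (c k) = |(j : ℝ) - k| := by
    rw [dist_eq_norm, ← sub_smul, norm_smul, ← sub_div, Real.norm_eq_abs, abs_div,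
      abs_of_pos hx0, div_mul_cancel₀ _ hx0.ne']
  have hdisj : (↑(Finset.range N) : Set ℕ).PairwiseDisjoint fun j => ball (c j) (1 / 2) := by
    intro j _ k _ hjk
    refine ball_disjoint_ball ?_
    have : (1 : ℤ) ≤ |(j : ℤ) - k| := Int.one_le_abs (sub_ne_zero.2 (by exact_mod_cast hjk))
    rw [hdist, add_halves]
    exact_mod_cast this
  calc N * μ (ball 0 (1 / 2)) = ∑ j ∈ Finset.range N, μ (ball (c j) (1 / 2)) := by
        simp [Measure.addHaar_ball_center]
    _ = μ (⋃ j ∈ Finset.range N, ball (c j) (1 / 2)) :=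
        (measure_biUnion_finset hdisj fun _ _ => measurableSet_ball).symm
    _ ≤ μ K := measure_mono (iUnion₂_subset fun j hj => hsub j (Finset.mem_range.1 hj))

lemma exists_subset_closedBall_of_measure_le {V : ℝ≥0∞} (hV : V ≠ ∞) :
    ∃ C : ℝ, 0 ≤ C ∧ ∀ K : Set E, Convex ℝ K → closedBall 0 1 ⊆ K → μ K ≤ V →
      K ⊆ closedBall 0 C := by
  obtain ⟨N, hN⟩ := ENNReal.exists_nat_mul_gt (measure_ball_pos μ (0 : E) one_half_pos).ne' hV
  refine ⟨2 * N, by positivity, fun K hK hB hKV x hx => ?_⟩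
  by_contra hxN
  rw [mem_closedBall_zero_iff, not_le] at hxN
  exact (nat_mul_measure_ball_le μ hK hB hx hxN.le).trans hKV |>.not_gt hN

end Volume

section Limit

variable {ι E F : Type*} [NormedAddCommGroup E] [NormedSpace ℝ E]
  [NormedAddCommGroup F] [NormedSpace ℝ F]

lemma ContinuousLinearMap.exists_tendsto_of_eventually_norm_le [ProperSpace F]
    (U : Ultrafilter ι) {P : ι → E →L[ℝ] F} {C : ℝ} (hP : ∀ᶠ i in U, ‖P i‖ ≤ C) :
    ∃ Q : E →L[ℝ] F, ∀ w, Tendsto (fun i => P i w) U (𝓝 (Q w)) := by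
  have hs : IsCompact (univ.pi fun w : E => closedBall (0 : F) (C * ‖w‖)) :=
    isCompact_univ_pi fun w => isCompact_closedBall _ _
  obtain ⟨f, hf, hPf⟩ := hs.ultrafilter_le_nhds (U.map fun i => ⇑(P i)) <| by
    refine le_principal_iff.2 (hP.mono fun i hi => mem_univ_pi.2 fun w => ?_)
    simpa using (P i).le_of_opNorm_le hi w
  let Q : E →ₗ[ℝ] F := linearMapOfTendsto f (fun i => (P i : E →ₗ[ℝ] F)) hPf
  exact ⟨Q.mkContinuous C fun w => mem_closedBall_zero_iff.1 (mem_univ_pi.1 hf w),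
    tendsto_pi_nhds.1 hPf⟩

lemma eventually_forall_mem_closure_image_exists_dist_lt [ProperSpace F] {l : Filter ι}
    {P : ι → E →L[ℝ] F} {Q : E →L[ℝ] F} (hPQ : ∀ w, Tendsto (fun i => P i w) l (𝓝 (Q w)))
    {s : Set E} (hs : Bornology.IsBounded s) {ε : ℝ} (hε : 0 < ε) :
    ∀ᶠ i in l, ∀ x ∈ closure (Q '' s), ∃ w ∈ s, dist x (P i w) < ε := by
  obtain ⟨t, hts, ht, hcover⟩ := (Q.lipschitz.isBounded_image hs).isCompact_closure
    |>.elim_finite_subcover_image (b := s) (c := fun w => ball (Q w) (ε / 2))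
      (fun _ _ => isOpen_ball) fun x hx => by
        obtain ⟨_, ⟨w, hw, rfl⟩, hxw⟩ := Metric.mem_closure_iff.1 hx (ε / 2) (half_pos hε)
        exact mem_biUnion hw (mem_ball.2 hxw)
  filter_upwards [(ht.eventually_all).2 fun w _ => (hPQ w) (ball_mem_nhds (Q w) (half_pos hε))]
    with i hi x hx
  obtain ⟨w, hwt, hxw⟩ := mem_iUnion₂.1 (hcover hx)
  refine ⟨w, hts hwt, ?_⟩
  calc dist x (P i w) ≤ dist x (Q w) + dist (Q w) (P i w) := dist_triangle _ _ _
    _ < ε / 2 + ε / 2 := add_lt_add (mem_ball.1 hxw) (mem_ball'.1 (hi w hwt))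
    _ = ε := add_halves ε

lemma Convex.mem_one_add_smul_of_dist_le {K : Set F} (hK : Convex ℝ K)
    (hB : closedBall 0 1 ⊆ K) {x y : F} (hy : y ∈ K) {ε : ℝ} (hε : 0 ≤ ε)
    (hxy : dist x y ≤ ε) : x ∈ (1 + ε) • K := by
  rw [hK.add_smul zero_le_one hε, one_smul, ← add_sub_cancel y x]
  refine add_mem_add hy (smul_set_mono hB ?_)
  rw [_root_.smul_closedBall _ _ zero_le_one, smul_zero, Real.norm_of_nonneg hε, mul_one,
    mem_closedBall_zero_iff, ← dist_eq_norm]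
  exact hxy

lemma eventually_closure_image_subset_smul [ProperSpace F] {l : Filter ι}
    {P : ι → E →L[ℝ] F} {Q : E →L[ℝ] F} (hPQ : ∀ w, Tendsto (fun i => P i w) l (𝓝 (Q w)))
    {J : F →ₗᵢ[ℝ] E} (hPJ : ∀ i x, P i (J x) = x) {ε : ℝ} (hε : 0 < ε) :
    ∀ᶠ i in l, closure (Q '' closedBall 0 1) ⊆ (1 + ε) • closure (P i '' closedBall 0 1) := by
  filter_upwards [eventually_forall_mem_closure_image_exists_dist_lt hPQ isBounded_closedBall hε]
    with i hi x hx
  obtain ⟨w, hw, hxw⟩ := hi x hx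
  have hK := ((convex_closedBall (0 : E) 1).linear_image (P i).toLinearMap).closure
  exact hK.mem_one_add_smul_of_dist_le (closedBall_subset_closure_image_closedBall (hPJ i))
    (subset_closure ⟨w, hw, rfl⟩) hε.le hxw.le

end Limit

lemma ENNReal.le_of_forall_pos_le_ofReal_one_add_pow_mul {a b : ℝ≥0∞} (d : ℕ)
    (h : ∀ ε : ℝ, 0 < ε → a ≤ ENNReal.ofReal ((1 + ε) ^ d) * b) : a ≤ b := by
  have hpow : Tendsto (fun ε : ℝ => ENNReal.ofReal ((1 + ε) ^ d)) (𝓝[>] 0) (𝓝 1) := by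
    have : Continuous fun ε : ℝ => (1 + ε) ^ d := by fun_prop
    simpa using ENNReal.tendsto_ofReal ((this.tendsto 0).mono_left nhdsWithin_le_nhds)
  exact ge_of_tendsto (by simpa using ENNReal.Tendsto.mul_const hpow (Or.inl one_ne_zero))
    (eventually_nhdsWithin_of_forall fun ε (hε : ε ∈ Ioi 0) => h ε hε)

section MinimalVolume

variable {ι E F : Type*} [NormedAddCommGroup E] [NormedSpace ℝ E]
  [NormedAddCommGroup F] [NormedSpace ℝ F] [MeasurableSpace F] [BorelSpace F]
  (μ : Measure F) [μ.IsAddHaarMeasure]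

lemma measure_closure_image_le_of_tendsto [FiniteDimensional ℝ F] {l : Filter ι} [l.NeBot]
    {P : ι → E →L[ℝ] F} {Q : E →L[ℝ] F} (hPQ : ∀ w, Tendsto (fun i => P i w) l (𝓝 (Q w)))
    {J : F →ₗᵢ[ℝ] E} (hPJ : ∀ i x, P i (J x) = x) {m : ℝ≥0∞}
    (hm : Tendsto (fun i => μ (closure (P i '' closedBall 0 1))) l (𝓝 m)) :
    μ (closure (Q '' closedBall 0 1)) ≤ m := by
  refine ENNReal.le_of_forall_pos_le_ofReal_one_add_pow_mul (Module.finrank ℝ F) fun ε hε => ?_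
  refine ge_of_tendsto (ENNReal.Tendsto.const_mul hm (Or.inr ENNReal.ofReal_ne_top)) ?_
  filter_upwards [eventually_closure_image_subset_smul hPQ hPJ hε] with i hi
  calc μ (closure (Q '' closedBall 0 1))
      ≤ μ ((1 + ε) • closure (P i '' closedBall 0 1)) := measure_mono hi
    _ = _ := by rw [Measure.addHaar_smul, abs_of_pos (by positivity)]

lemma exists_norm_le_of_measure_closure_image_le (J : F →ₗᵢ[ℝ] E) {V : ℝ≥0∞} (hV : V ≠ ∞) :
    ∃ C : ℝ, ∀ P : E →L[ℝ] F, (∀ x, P (J x) = x) →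
      μ (closure (P '' closedBall 0 1)) ≤ V → ‖P‖ ≤ C := by
  obtain ⟨C, hC, hK⟩ := exists_subset_closedBall_of_measure_le μ hV
  refine ⟨C, fun P hPJ hPV => P.opNorm_le_of_unit_norm hC fun w hw => ?_⟩
  have hPK := hK _ ((convex_closedBall _ _).linear_image P.toLinearMap).closure
    (closedBall_subset_closure_image_closedBall hPJ) hPV
  simpa using hPK (subset_closure (mem_image_of_mem P (mem_closedBall_zero_iff.2 hw.le)))

lemma LinearIsometry.exists_forall_measure_closure_image_le [FiniteDimensional ℝ F]
    (J : F →ₗᵢ[ℝ] E) :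
    ∃ Q : E →L[ℝ] F, (∀ x, Q (J x) = x) ∧ ∀ P : E →L[ℝ] F, (∀ x, P (J x) = x) →
      μ (closure (Q '' closedBall 0 1)) ≤ μ (closure (P '' closedBall 0 1)) := by
  set S := {P : E →L[ℝ] F | ∀ x, P (J x) = x}
  set f : (E →L[ℝ] F) → ℝ≥0∞ := fun P => μ (closure (P '' closedBall 0 1))
  obtain ⟨P₀, hP₀⟩ := J.exists_leftInverse
  obtain ⟨u, -, hu, huS⟩ := exists_seq_tendsto_sInf
    (Set.Nonempty.image f (s := S) ⟨P₀, hP₀⟩) (OrderBot.bddBelow _)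
  choose P hPS hPu using huS
  set m := sInf (f '' S)
  have hm : m ≠ ∞ := ne_top_of_le_ne_top
    (P₀.lipschitz.isBounded_image isBounded_closedBall).isCompact_closure.measure_lt_top.ne
    (sInf_le (mem_image_of_mem f hP₀))
  obtain ⟨C, hC⟩ := exists_norm_le_of_measure_closure_image_le μ J
    (ENNReal.add_ne_top.2 ⟨hm, ENNReal.one_ne_top⟩)
  have hPu' : Tendsto (fun n => f (P n)) atTop (𝓝 m) := by simpa [hPu] using hu
  have hPC : ∀ᶠ n in atTop, ‖P n‖ ≤ C := by
    filter_upwards [hPu'.eventually (gt_mem_nhds (ENNReal.lt_add_right hm one_ne_zero))] with n hn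
    exact hC (P n) (hPS n) hn.le
  let U := Ultrafilter.of (atTop : Filter ℕ)
  obtain ⟨Q, hQ⟩ := ContinuousLinearMap.exists_tendsto_of_eventually_norm_le U
    (Ultrafilter.of_le atTop hPC)
  have hQS : Q ∈ S := fun x =>
    tendsto_nhds_unique (hQ (J x)) (by simpa only [hPS _ x] using tendsto_const_nhds)
  refine ⟨Q, hQS, fun P' hP' => ?_⟩
  calc f Q ≤ m := measure_closure_image_le_of_tendsto μ hQ (fun n => hPS n)
        (hPu'.mono_left (Ultrafilter.of_le atTop))
    _ ≤ f P' := sInf_le (mem_image_of_mem f hP')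

end MinimalVolume

/-- Every finite-dimensional normed space has a minimal-volume sufficient enlargement. -/
theorem stmt5 (X : Type) [NormedAddCommGroup X] [NormedSpace ℝ X]
    [MeasurableSpace X] [BorelSpace X] [FiniteDimensional ℝ X] :
    ∃ A : Set X, IsMVSE X A := by
  obtain ⟨Q, hQJ, hQmin⟩ := (lpInftyEmbedding X).exists_forall_measure_closure_image_le
    (Module.finBasis ℝ X).addHaar
  refine ⟨closure (Q '' closedBall 0 1),
    isSE_of_lpInftyEmbedding (isBall_closure_image_closedBall hQJ) hQJ subset_closure,
    fun D hD => ?_⟩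
  obtain ⟨P, hPJ, hPD⟩ := hD.2 _ (lpInftyEmbedding X)
  exact (hQmin P hPJ).trans (measure_mono (closure_minimal hPD hD.1.2.2.1))
end
end

section
/- Let μ_1 and μ_2 be finite even nonnegative Borel measures on the unit sphere S of ℓ_2^d. If ∫_S |⟨x,z⟩| dμ_1(z) ≤ ∫_S |⟨x,z⟩| dμ_2(z) for every x ∈ ℝ^d, then μ_1(S) ≤ μ_2(S). In particular, if K_1 ⊆ K_2 are symmetric zonotopes with generating measures μ_1, μ_2, then μ_1(S) ≤ μ_2(S). -/
open Set Metric MeasureTheory Filter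
open scoped RealInnerProductSpace ENNReal

noncomputable section

/-!
Average the hypothesis over the unit ball `B`: by Tonelli,
`∫_B ∫ |⟪x, z⟫| dμ(z) dx = ∫ c(z) dμ(z)` with `c(z) = ∫_B |⟪x, z⟫| dx`. A reflection exchanging
two unit vectors preserves `B` and Lebesgue measure, so `c` is a positive finite constant on the
sphere, and the averaged inequality reads `c · μ₁(S) ≤ c · μ₂(S)`.
-/

namespace InnerProductSpace

theorem integrable_abs_inner_right {E : Type*} [NormedAddCommGroup E] [InnerProductSpace ℝ E]
    [MeasurableSpace E] [OpensMeasurableSpace E] {μ : Measure E} [IsFiniteMeasure μ]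
    (hμ : ∀ᵐ z ∂μ, ‖z‖ = 1) (x : E) : Integrable (fun z => |⟪x, z⟫|) μ := by
  refine Integrable.mono' (integrable_const ‖x‖) (by fun_prop) (hμ.mono fun z hz => ?_)
  simpa [hz] using abs_real_inner_le_norm x z

variable {E : Type*} [NormedAddCommGroup E] [InnerProductSpace ℝ E] [FiniteDimensional ℝ E]
  [MeasurableSpace E] [BorelSpace E]

def ballAbsMoment (z : E) : ℝ≥0∞ :=
  ∫⁻ x in ball (0 : E) 1, ENNReal.ofReal |⟪x, z⟫|

theorem ballAbsMoment_congr_norm {z w : E} (h : ‖z‖ = ‖w‖) :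
    ballAbsMoment z = ballAbsMoment w := by
  let T : E ≃ₗᵢ[ℝ] E := Submodule.reflection (ℝ ∙ (z - w))ᗮ
  have hTz : T z = w := Submodule.reflection_sub h
  have hball : T ⁻¹' ball 0 1 = ball 0 1 := by simp
  calc ballAbsMoment z
      = ∫⁻ x in T ⁻¹' ball 0 1, ENNReal.ofReal |⟪T x, w⟫| := by
        rw [hball, ballAbsMoment, ← hTz]
        simp only [LinearIsometryEquiv.inner_map_map]
    _ = ballAbsMoment w :=
        T.measurePreserving.setLIntegral_comp_preimage_emb
          T.toHomeomorph.measurableEmbedding (fun x => ENNReal.ofReal |⟪x, w⟫|) _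

theorem ballAbsMoment_lt_top (z : E) : ballAbsMoment z < ∞ := by
  calc ballAbsMoment z
      ≤ ∫⁻ _ in ball (0 : E) 1, ENNReal.ofReal ‖z‖ := by
        refine setLIntegral_mono measurable_const fun x hx => ENNReal.ofReal_le_ofReal ?_
        calc |⟪x, z⟫| ≤ ‖x‖ * ‖z‖ := abs_real_inner_le_norm x z
          _ ≤ ‖z‖ := mul_le_of_le_one_left (norm_nonneg z) (mem_ball_zero_iff.1 hx).le
    _ < ∞ := by
        rw [setLIntegral_const]
        exact ENNReal.mul_lt_top ENNReal.ofReal_lt_top measure_ball_lt_top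

theorem ballAbsMoment_pos {z : E} (hz : z ≠ 0) : 0 < ballAbsMoment z := by
  have hf : Continuous fun x : E => ENNReal.ofReal |⟪x, z⟫| :=
    ENNReal.continuous_ofReal.comp (by fun_prop)
  rw [ballAbsMoment, lintegral_pos_iff_support hf.measurable,
    Measure.restrict_apply' measurableSet_ball]
  have hnz : 0 < ‖z‖ := norm_pos_iff.2 hz
  refine (hf.isOpen_support.inter isOpen_ball).measure_pos volume
    ⟨(2 * ‖z‖)⁻¹ • z, ?_, ?_⟩
  · simp [Function.mem_support, real_inner_smul_left, hz]
  · rw [mem_ball_zero_iff, norm_smul, Real.norm_of_nonneg (by positivity),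
      inv_mul_lt_iff₀ (by positivity)]
    linarith

theorem lintegral_ball_lintegral_abs_inner {μ : Measure E} [SFinite μ]
    (hμ : ∀ᵐ z ∂μ, ‖z‖ = 1) {w : E} (hw : ‖w‖ = 1) :
    ∫⁻ x in ball (0 : E) 1, ∫⁻ z, ENNReal.ofReal |⟪x, z⟫| ∂μ = ballAbsMoment w * μ univ := by
  rw [lintegral_lintegral_swap (by fun_prop), ← lintegral_const]
  exact lintegral_congr_ae (hμ.mono fun z hz => ballAbsMoment_congr_norm (hz.trans hw.symm))

end InnerProductSpace

open InnerProductSpace in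
theorem stmt9_general (d : ℕ) (μ₁ μ₂ : Measure (EuclideanSpace ℝ (Fin d)))
    [IsFiniteMeasure μ₁] [IsFiniteMeasure μ₂]
    (h₁sphere : μ₁ (sphere (0 : EuclideanSpace ℝ (Fin d)) 1)ᶜ = 0)
    (h₂sphere : μ₂ (sphere (0 : EuclideanSpace ℝ (Fin d)) 1)ᶜ = 0)
    (h : ∀ x : EuclideanSpace ℝ (Fin d), (∫ z, |⟪x, z⟫| ∂μ₁) ≤ ∫ z, |⟪x, z⟫| ∂μ₂) :
    μ₁ univ ≤ μ₂ univ := by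
  obtain hS | ⟨w, hw⟩ := (sphere (0 : EuclideanSpace ℝ (Fin d)) 1).eq_empty_or_nonempty
  · simp_all
  have hμ₁ : ∀ᵐ z ∂μ₁, ‖z‖ = 1 := by
    filter_upwards [mem_ae_iff.2 h₁sphere] with z hz
      using mem_sphere_zero_iff_norm.1 hz
  have hμ₂ : ∀ᵐ z ∂μ₂, ‖z‖ = 1 := by
    filter_upwards [mem_ae_iff.2 h₂sphere] with z hz
      using mem_sphere_zero_iff_norm.1 hz
  have hw₁ : ‖w‖ = 1 := mem_sphere_zero_iff_norm.1 hw
  have hpointwise (x : EuclideanSpace ℝ (Fin d)) :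
      ∫⁻ z, ENNReal.ofReal |⟪x, z⟫| ∂μ₁ ≤ ∫⁻ z, ENNReal.ofReal |⟪x, z⟫| ∂μ₂ := by
    rw [← ofReal_integral_eq_lintegral_ofReal (integrable_abs_inner_right hμ₁ x)
        (ae_of_all _ fun _ => abs_nonneg _),
      ← ofReal_integral_eq_lintegral_ofReal (integrable_abs_inner_right hμ₂ x)
        (ae_of_all _ fun _ => abs_nonneg _)]
    exact ENNReal.ofReal_le_ofReal (h x)
  have hball := lintegral_mono (μ := volume.restrict (ball 0 1)) hpointwise
  rw [lintegral_ball_lintegral_abs_inner hμ₁ hw₁,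
    lintegral_ball_lintegral_abs_inner hμ₂ hw₁] at hball
  exact (ENNReal.mul_le_mul_iff_right (ballAbsMoment_pos (ne_of_mem_sphere hw one_ne_zero)).ne'
    (ballAbsMoment_lt_top w).ne).1 hball

theorem stmt9 (d : ℕ) (μ₁ μ₂ : Measure (EuclideanSpace ℝ (Fin d)))
    [IsFiniteMeasure μ₁] [IsFiniteMeasure μ₂]
    (h₁even : Measure.map (fun x => -x) μ₁ = μ₁)
    (h₂even : Measure.map (fun x => -x) μ₂ = μ₂)
    (h₁sphere : μ₁ (sphere (0 : EuclideanSpace ℝ (Fin d)) 1)ᶜ = 0)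
    (h₂sphere : μ₂ (sphere (0 : EuclideanSpace ℝ (Fin d)) 1)ᶜ = 0)
    (h : ∀ x : EuclideanSpace ℝ (Fin d), (∫ z, |⟪x, z⟫| ∂μ₁) ≤ ∫ z, |⟪x, z⟫| ∂μ₂) :
    μ₁ univ ≤ μ₂ univ :=
  stmt9_general d μ₁ μ₂ h₁sphere h₂sphere h
end
end

section
/- Let d ≥ 2, let S be the unit sphere of ℓ_2^d, let η be the rotation-invariant probability measure on S, and let c > 0 be a constant such that η(Δ(x,r)) ≥ c·r^{d−1} for all x ∈ S and all r ∈ (0,1). Let μ be a finite nonnegative Borel measure on S, and let ω ∈ (0,1) and δ > 0. Define Ω(ω,δ) = {x ∈ S : μ(Δ(x,ω)) ≥ δ}, and for Γ ⊆ S let Γ_ω = {x ∈ S : inf{‖x−y‖ : y ∈ Γ} ≤ ω}. Then μ(S \ (Ω(ω,δ))_ω) ≤ δ/(c·ω^{d−1}). -/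
/-!
Let `B` be the set of points of `S` farther than `ω` from `Ω(ω, δ)`, and count the pairs
`(x, y) ∈ S × B` with `y ∈ Δ(x, ω)` in two ways. For fixed `x`, such a `y` exists only if neither
`x` nor `-x` lies in `Ω(ω, δ)`, so these `y` carry `μ`-mass less than `δ`. For fixed `y ∈ B` the
relation is symmetric, so `x` ranges over `Δ(y, ω)`, of `η`-mass at least `c ω^(d-1)`. Hence
`c ω^(d-1) μ(B) ≤ δ`.
-/

open Set Metric MeasureTheory Filter
open scoped ENNReal

noncomputable section

/-- The cap `Δ(x₀, r)` on the unit sphere of `ℓ_2^d`. -/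
def cap {d : ℕ} (x₀ : EuclideanSpace ℝ (Fin d)) (r : ℝ) : Set (EuclideanSpace ℝ (Fin d)) :=
  {x ∈ sphere (0 : EuclideanSpace ℝ (Fin d)) 1 | ‖x - x₀‖ < r ∨ ‖x + x₀‖ < r}

theorem mul_measure_le_mul_measure_univ_of_sections {α β : Type*} [MeasurableSpace α]
    [MeasurableSpace β] (η : Measure α) (μ : Measure β) [SFinite η] [SFinite μ]
    {A : Set (α × β)} (hA : MeasurableSet A) {B : Set β} (hB : MeasurableSet B) {a b : ℝ≥0∞}
    (hlow : ∀ y ∈ B, a ≤ η ((fun x => (x, y)) ⁻¹' A))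
    (hup : ∀ᵐ x ∂η, μ (Prod.mk x ⁻¹' A) ≤ b) :
    a * μ B ≤ b * η univ :=
  calc a * μ B = ∫⁻ _ in B, a ∂μ := (setLIntegral_const B a).symm
    _ ≤ ∫⁻ y in B, η ((fun x => (x, y)) ⁻¹' A) ∂μ := setLIntegral_mono' hB hlow
    _ ≤ ∫⁻ y, η ((fun x => (x, y)) ⁻¹' A) ∂μ := setLIntegral_le_lintegral _ _
    _ = ∫⁻ x, μ (Prod.mk x ⁻¹' A) ∂η := by
      rw [← Measure.prod_apply_symm hA, Measure.prod_apply hA]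
    _ ≤ ∫⁻ _, b ∂η := lintegral_mono_ae hup
    _ = b * η univ := lintegral_const b

namespace cap

variable {d : ℕ} {x y : EuclideanSpace ℝ (Fin d)} {r : ℝ}

theorem subset_sphere : cap x r ⊆ sphere 0 1 := fun _ hy => hy.1

theorem neg_eq : cap (-x) r = cap x r := by
  ext y
  simp only [cap, mem_ofPred_eq, sub_neg_eq_add, ← sub_eq_add_neg]
  tauto

theorem mem_comm (hx : x ∈ sphere 0 1) (hy : y ∈ sphere 0 1) : y ∈ cap x r ↔ x ∈ cap y r := by
  simp only [cap, mem_ofPred_eq, hx, hy, true_and, norm_sub_rev y x, add_comm y x]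

theorem mem_ball_or_mem_ball_neg (h : y ∈ cap x r) : y ∈ ball x r ∨ y ∈ ball (-x) r := by
  simpa only [mem_ball, dist_eq_norm, sub_neg_eq_add] using h.2

theorem measurableSet_setOf_snd_mem (r : ℝ) :
    MeasurableSet {p : EuclideanSpace ℝ (Fin d) × EuclideanSpace ℝ (Fin d) | p.2 ∈ cap p.1 r} :=
  (isClosed_sphere.measurableSet.preimage measurable_snd).inter <|
    (IsOpen.union (isOpen_lt (continuous_snd.sub continuous_fst).norm continuous_const)
      (isOpen_lt (continuous_snd.add continuous_fst).norm continuous_const)).measurableSet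

end cap

/-- The paper's `Ω(ω, δ)`. -/
def heavyCenters {d : ℕ} (μ : Measure (EuclideanSpace ℝ (Fin d))) (ω δ : ℝ) :
    Set (EuclideanSpace ℝ (Fin d)) :=
  {x ∈ sphere 0 1 | ENNReal.ofReal δ ≤ μ (cap x ω)}

section heavyCenters

variable {d : ℕ} {μ : Measure (EuclideanSpace ℝ (Fin d))} {ω δ : ℝ}
  {x y : EuclideanSpace ℝ (Fin d)}

theorem measure_cap_lt_of_mem_cap_of_notMem_thickening (hx : x ∈ sphere 0 1)
    (hy : y ∈ cap x ω) (hyΩ : y ∉ thickening ω (heavyCenters μ ω δ)) :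
    μ (cap x ω) < ENNReal.ofReal δ := by
  by_contra! heavy
  have hxΩ : x ∈ heavyCenters μ ω δ := ⟨hx, heavy⟩
  have hnxΩ : -x ∈ heavyCenters μ ω δ :=
    ⟨by simpa using hx, by rwa [cap.neg_eq]⟩
  rw [thickening_eq_biUnion_ball] at hyΩ
  rcases cap.mem_ball_or_mem_ball_neg hy with hyx | hyx
  · exact hyΩ (mem_biUnion hxΩ hyx)
  · exact hyΩ (mem_biUnion hnxΩ hyx)

theorem measure_diff_thickening_inter_cap_le (hx : x ∈ sphere 0 1) :
    μ ((sphere 0 1 \ thickening ω (heavyCenters μ ω δ)) ∩ cap x ω) ≤ ENNReal.ofReal δ := by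
  rcases eq_empty_or_nonempty ((sphere 0 1 \ thickening ω (heavyCenters μ ω δ)) ∩ cap x ω)
    with hempty | ⟨y, ⟨_, hyΩ⟩, hy⟩
  · simp [hempty]
  · exact (measure_mono inter_subset_right).trans
      (measure_cap_lt_of_mem_cap_of_notMem_thickening hx hy hyΩ).le

end heavyCenters

theorem measure_sphere_diff_thickening_heavyCenters_le {d : ℕ}
    (η : Measure (EuclideanSpace ℝ (Fin d))) [IsProbabilityMeasure η]
    (hηsphere : ∀ᵐ x ∂η, x ∈ sphere (0 : EuclideanSpace ℝ (Fin d)) 1) {c : ℝ} (hc : 0 < c)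
    {ω : ℝ} (hω : 0 < ω)
    (hcap : ∀ x ∈ sphere 0 1, ENNReal.ofReal (c * ω ^ (d - 1)) ≤ η (cap x ω))
    (μ : Measure (EuclideanSpace ℝ (Fin d))) [IsFiniteMeasure μ] (δ : ℝ) :
    μ (sphere 0 1 \ thickening ω (heavyCenters μ ω δ)) ≤
      ENNReal.ofReal (δ / (c * ω ^ (d - 1))) := by
  set B := sphere 0 1 \ thickening ω (heavyCenters μ ω δ)
  have hB : MeasurableSet B := isClosed_sphere.measurableSet.diff isOpen_thickening.measurableSet
  have hcω : 0 < c * ω ^ (d - 1) := mul_pos hc (pow_pos hω _)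
  have key : ENNReal.ofReal (c * ω ^ (d - 1)) * μ B ≤ ENNReal.ofReal δ * η univ := by
    refine mul_measure_le_mul_measure_univ_of_sections η μ
      ((hB.preimage measurable_snd).inter (cap.measurableSet_setOf_snd_mem ω)) hB ?_ ?_
    · intro y hy
      refine (hcap y hy.1).trans (measure_mono fun x hx => ⟨hy, ?_⟩)
      exact (cap.mem_comm (cap.subset_sphere hx) hy.1).2 hx
    · filter_upwards [hηsphere] with x hx
      exact measure_diff_thickening_inter_cap_le hx
  rwa [measure_univ, mul_one, mul_comm,
    ← ENNReal.le_div_iff_mul_le (Or.inl (ENNReal.ofReal_pos.2 hcω).ne')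
      (Or.inl ENNReal.ofReal_ne_top), ← ENNReal.ofReal_div_of_pos hcω] at key

theorem stmt10_general (d : ℕ)
    (η : Measure (EuclideanSpace ℝ (Fin d))) [IsProbabilityMeasure η]
    (hηsphere : η (sphere (0 : EuclideanSpace ℝ (Fin d)) 1)ᶜ = 0)
    (c : ℝ) (hc : 0 < c)
    (hcap : ∀ x ∈ sphere (0 : EuclideanSpace ℝ (Fin d)) 1, ∀ r ∈ Ioo (0 : ℝ) 1,
      ENNReal.ofReal (c * r ^ (d - 1)) ≤ η (cap x r))
    (μ : Measure (EuclideanSpace ℝ (Fin d))) [IsFiniteMeasure μ]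
    (ω δ : ℝ) (hω : ω ∈ Ioo (0 : ℝ) 1) :
    μ (sphere (0 : EuclideanSpace ℝ (Fin d)) 1 \
        {x ∈ sphere (0 : EuclideanSpace ℝ (Fin d)) 1 |
          ∃ y ∈ {x' ∈ sphere (0 : EuclideanSpace ℝ (Fin d)) 1 |
                  ENNReal.ofReal δ ≤ μ (cap x' ω)},
            dist x y ≤ ω}) ≤
      ENNReal.ofReal (δ / (c * ω ^ (d - 1))) := by
  refine le_trans (measure_mono ?_) (measure_sphere_diff_thickening_heavyCenters_le η
    (ae_iff.2 hηsphere) hc hω.1 (fun x hx => hcap x hx ω hω) μ δ)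
  rintro x ⟨hx, hfar⟩
  refine ⟨hx, fun hnear => hfar ⟨hx, ?_⟩⟩
  obtain ⟨y, hy, hxy⟩ := mem_thickening_iff.1 hnear
  exact ⟨y, hy, hxy.le⟩

theorem stmt10 (d : ℕ) (hd : 2 ≤ d)
    (η : Measure (EuclideanSpace ℝ (Fin d))) [IsProbabilityMeasure η]
    (hηsphere : η (sphere (0 : EuclideanSpace ℝ (Fin d)) 1)ᶜ = 0)
    (hηrot : ∀ T : EuclideanSpace ℝ (Fin d) ≃ₗᵢ[ℝ] EuclideanSpace ℝ (Fin d),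
      Measure.map T η = η)
    (c : ℝ) (hc : 0 < c)
    (hcap : ∀ x ∈ sphere (0 : EuclideanSpace ℝ (Fin d)) 1, ∀ r ∈ Ioo (0 : ℝ) 1,
      ENNReal.ofReal (c * r ^ (d - 1)) ≤ η (cap x r))
    (μ : Measure (EuclideanSpace ℝ (Fin d))) [IsFiniteMeasure μ]
    (hμsphere : μ (sphere (0 : EuclideanSpace ℝ (Fin d)) 1)ᶜ = 0)
    (ω δ : ℝ) (hω : ω ∈ Ioo (0 : ℝ) 1) (hδ : 0 < δ) :
    μ (sphere (0 : EuclideanSpace ℝ (Fin d)) 1 \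
        {x ∈ sphere (0 : EuclideanSpace ℝ (Fin d)) 1 |
          ∃ y ∈ {x' ∈ sphere (0 : EuclideanSpace ℝ (Fin d)) 1 |
                  ENNReal.ofReal δ ≤ μ (cap x' ω)},
            dist x y ≤ ω}) ≤
      ENNReal.ofReal (δ / (c * ω ^ (d - 1))) :=
  stmt10_general d η hηsphere c hc hcap μ ω δ hω
end
end

section
/- Let d ∈ ℕ, ρ > 0, and ν be real numbers with 0 < ν < 2ρ². Let s and t be unit vectors in ℓ_2^d whose top sets coincide, i.e., Σ := {i : |s_i| ≥ ρ} = {i : |t_i| ≥ ρ}, where s_i, t_i are the coordinates of s, t. Suppose that |s_α t_β − s_β t_α| < ν for all α, β ∈ Σ. Then min{‖t+s‖, ‖t−s‖} ≤ √(2ν/ρ² + 4dρ²). -/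
/-!
On the common top set `Σ`, Lagrange's identity gives
`(∑ s²)(∑ t²) - (∑ s t)² = ½ ∑_{α,β} (s_α t_β - s_β t_α)² ≤ (|Σ| ν)² / 2 ≤ (ν / ρ²)² / 2`,
because `|Σ| ρ² ≤ ∑ s² = 1`. Off `Σ` every coordinate of `s` and `t` is below `ρ`, so both
`∑_Σ s²` and `∑_Σ t²` are at least `1 - dρ²` and the part of `⟪s, t⟫` off `Σ` is at most `dρ²`.
Hence `|⟪s, t⟫| ≥ 1 - ν/ρ² - 2dρ²`, while for unit vectors
`min (‖t + s‖, ‖t - s‖)² = 2 - 2 |⟪s, t⟫|`.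
-/

open Finset

namespace Finset

variable {ι : Type*}

theorem sum_sum_sub_mul_sq {R : Type*} [CommRing R] (S : Finset ι) (f g : ι → R) :
    ∑ i ∈ S, ∑ j ∈ S, (f i * g j - f j * g i) ^ 2 =
      2 * ((∑ i ∈ S, f i ^ 2) * (∑ i ∈ S, g i ^ 2) - (∑ i ∈ S, f i * g i) ^ 2) := by
  have expand : ∀ i j, (f i * g j - f j * g i) ^ 2 =
      f i ^ 2 * g j ^ 2 + f j ^ 2 * g i ^ 2 - 2 * ((f i * g i) * (f j * g j)) := fun i j => by ring
  simp only [expand, sum_sub_distrib, sum_add_distrib, ← mul_sum, ← sum_mul]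
  ring

theorem sum_sq_mul_sum_sq_sub_le_sq_sum_mul (S : Finset ι) (f g : ι → ℝ) {ν : ℝ}
    (h : ∀ i ∈ S, ∀ j ∈ S, |f i * g j - f j * g i| ≤ ν) :
    (∑ i ∈ S, f i ^ 2) * (∑ i ∈ S, g i ^ 2) - (#S * ν) ^ 2 / 2 ≤ (∑ i ∈ S, f i * g i) ^ 2 := by
  have hsum : ∑ i ∈ S, ∑ j ∈ S, (f i * g j - f j * g i) ^ 2 ≤ (#S * ν) ^ 2 := by
    calc ∑ i ∈ S, ∑ j ∈ S, (f i * g j - f j * g i) ^ 2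
        ≤ ∑ i ∈ S, ∑ j ∈ S, ν ^ 2 := by
          refine sum_le_sum fun i hi => sum_le_sum fun j hj => ?_
          simpa only [sq_abs] using pow_le_pow_left₀ (abs_nonneg _) (h i hi j hj) 2
      _ = (#S * ν) ^ 2 := by simp only [sum_const, nsmul_eq_mul]; ring
  rw [sum_sum_sub_mul_sq] at hsum
  linarith

theorem card_mul_sq_le_sum_sq (S : Finset ι) (f : ι → ℝ) {ρ : ℝ} (hρ : 0 ≤ ρ)
    (h : ∀ i ∈ S, ρ ≤ |f i|) : #S * ρ ^ 2 ≤ ∑ i ∈ S, f i ^ 2 := by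
  rw [← nsmul_eq_mul]
  exact card_nsmul_le_sum S _ _ fun i hi => by
    simpa only [sq_abs] using pow_le_pow_left₀ hρ (h i hi) 2

theorem abs_sum_mul_le_card_mul_sq (S : Finset ι) (f g : ι → ℝ) {ρ : ℝ}
    (hf : ∀ i ∈ S, |f i| ≤ ρ) (hg : ∀ i ∈ S, |g i| ≤ ρ) :
    |∑ i ∈ S, f i * g i| ≤ #S * ρ ^ 2 := by
  rw [← nsmul_eq_mul]
  refine (abs_sum_le_sum_abs _ _).trans (sum_le_card_nsmul S _ _ fun i hi => ?_)
  rw [abs_mul, sq]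
  exact mul_le_mul (hf i hi) (hg i hi) (abs_nonneg _) ((abs_nonneg _).trans (hf i hi))

end Finset

-- For `0 ≤ y ≤ x` one has `(x - y)² ≤ x² - y² / 2`.
theorem sub_le_abs_of_mul_sub_sq_le {x y a b p : ℝ} (hy : 0 ≤ y) (ha : x ≤ a) (hb : x ≤ b)
    (h : a * b - y ^ 2 / 2 ≤ p ^ 2) : x - y ≤ |p| := by
  rcases le_or_gt x y with hxy | hxy
  · linarith [abs_nonneg p]
  · have hx : 0 ≤ x := hy.trans hxy.le
    have hab : x ^ 2 ≤ a * b := by nlinarith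
    exact (le_abs_self _).trans (sq_le_sq.1 (by nlinarith))

theorem min_norm_add_norm_sub_le_sqrt {E : Type*} [NormedAddCommGroup E] [InnerProductSpace ℝ E]
    {s t : E} (hs : ‖s‖ = 1) (ht : ‖t‖ = 1) {c : ℝ} (hc : c ≤ |inner ℝ t s|) :
    min ‖t + s‖ ‖t - s‖ ≤ √(2 - 2 * c) := by
  rcases le_abs'.1 hc with h | h
  · refine (min_le_left _ _).trans (Real.le_sqrt_of_sq_le ?_)
    rw [norm_add_sq_real, hs, ht]; linarith
  · refine (min_le_right _ _).trans (Real.le_sqrt_of_sq_le ?_)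
    rw [norm_sub_sq_real, hs, ht]; linarith

section TopSet

variable {ι : Type*} [Fintype ι]

noncomputable def topSet (ρ : ℝ) (s : ι → ℝ) : Finset ι := {i | ρ ≤ |s i|}

theorem mem_topSet {ρ : ℝ} {s : ι → ℝ} {i : ι} : i ∈ topSet ρ s ↔ ρ ≤ |s i| := by
  simp [topSet]

variable {ρ ν : ℝ} {s t : ι → ℝ}

theorem abs_le_of_notMem_topSet {u : ι → ℝ} (htop : topSet ρ u = topSet ρ s) {i : ι}
    (hi : i ∉ topSet ρ s) : |u i| ≤ ρ := by
  rw [← htop, mem_topSet, not_le] at hi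
  exact hi.le

variable [DecidableEq ι]

theorem abs_sum_compl_topSet_mul_le {f g : ι → ℝ} (hf : topSet ρ f = topSet ρ s)
    (hg : topSet ρ g = topSet ρ s) :
    |∑ i ∈ (topSet ρ s)ᶜ, f i * g i| ≤ Fintype.card ι * ρ ^ 2 := by
  refine (abs_sum_mul_le_card_mul_sq _ f g (fun i hi => abs_le_of_notMem_topSet hf (mem_compl.1 hi))
    (fun i hi => abs_le_of_notMem_topSet hg (mem_compl.1 hi))).trans ?_
  gcongr
  exact card_le_univ _

theorem one_sub_card_mul_sq_le_sum_topSet_sq {u : ι → ℝ} (hu : ∑ i, u i ^ 2 = 1)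
    (htop : topSet ρ u = topSet ρ s) :
    1 - Fintype.card ι * ρ ^ 2 ≤ ∑ i ∈ topSet ρ s, u i ^ 2 := by
  have small := abs_sum_compl_topSet_mul_le htop htop
  simp only [← sq, abs_of_nonneg (sum_nonneg fun i _ => sq_nonneg (u i))] at small
  linarith [sum_add_sum_compl (topSet ρ s) fun i => u i ^ 2]

theorem sub_le_abs_sum_mul_of_topSet (hρ : 0 < ρ) (hν : 0 ≤ ν) (hs : ∑ i, s i ^ 2 = 1)
    (ht : ∑ i, t i ^ 2 = 1) (htop : topSet ρ s = topSet ρ t)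
    (hdet : ∀ α ∈ topSet ρ s, ∀ β ∈ topSet ρ s, |s α * t β - s β * t α| ≤ ν) :
    1 - ν / ρ ^ 2 - 2 * Fintype.card ι * ρ ^ 2 ≤ |∑ i, s i * t i| := by
  set T := topSet ρ s
  set n : ℝ := (Fintype.card ι : ℝ)
  have hA : 1 - n * ρ ^ 2 ≤ ∑ i ∈ T, s i ^ 2 := one_sub_card_mul_sq_le_sum_topSet_sq hs rfl
  have hB : 1 - n * ρ ^ 2 ≤ ∑ i ∈ T, t i ^ 2 := one_sub_card_mul_sq_le_sum_topSet_sq ht htop.symm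
  have hcard : #T * ν ≤ ν / ρ ^ 2 := by
    have : #T * ρ ^ 2 ≤ 1 := (card_mul_sq_le_sum_sq T s hρ.le fun i hi => mem_topSet.1 hi).trans
      (hs ▸ sum_le_univ_sum_of_nonneg fun i => sq_nonneg (s i))
    rw [le_div_iff₀ (by positivity)]
    nlinarith
  have hPT : 1 - n * ρ ^ 2 - ν / ρ ^ 2 ≤ |∑ i ∈ T, s i * t i| := by
    refine sub_le_abs_of_mul_sub_sq_le (by positivity) hA hB
      ((sum_sq_mul_sum_sq_sub_le_sq_sum_mul T s t hdet).trans' ?_)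
    gcongr
  have hrest := abs_sum_compl_topSet_mul_le (s := s) rfl htop.symm
  rw [← sum_add_sum_compl T]
  linarith [abs_sub_abs_le_abs_add (∑ i ∈ T, s i * t i) (∑ i ∈ Tᶜ, s i * t i)]

end TopSet

theorem stmt13_general (d : ℕ) (ρ ν : ℝ) (hρ : 0 < ρ) (hν : 0 < ν)
    (s t : EuclideanSpace ℝ (Fin d)) (hs : ‖s‖ = 1) (ht : ‖t‖ = 1)
    (htop : {i : Fin d | ρ ≤ |s i|} = {i : Fin d | ρ ≤ |t i|})
    (hdet : ∀ α β : Fin d, ρ ≤ |s α| → ρ ≤ |s β| →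
      |s α * t β - s β * t α| < ν) :
    min ‖t + s‖ ‖t - s‖ ≤ Real.sqrt (2 * ν / ρ ^ 2 + 4 * d * ρ ^ 2) := by
  have hsum : ∀ u : EuclideanSpace ℝ (Fin d), ‖u‖ = 1 → ∑ i, u i ^ 2 = 1 := fun u hu => by
    rw [← EuclideanSpace.real_norm_sq_eq, hu, one_pow]
  have htop' : topSet ρ s = topSet ρ t := by
    ext i
    rw [mem_topSet, mem_topSet]
    exact Set.ext_iff.1 htop i
  have key := sub_le_abs_sum_mul_of_topSet hρ hν.le (hsum s hs) (hsum t ht) htop'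
    fun α hα β hβ => (hdet α β (mem_topSet.1 hα) (mem_topSet.1 hβ)).le
  have hinner : inner ℝ t s = ∑ i, s i * t i := by simp [PiLp.inner_apply]
  rw [← hinner, Fintype.card_fin] at key
  convert min_norm_add_norm_sub_le_sqrt hs ht key using 2
  ring

theorem stmt13 (d : ℕ) (ρ ν : ℝ) (hρ : 0 < ρ) (hν : 0 < ν) (hνρ : ν < 2 * ρ ^ 2)
    (s t : EuclideanSpace ℝ (Fin d)) (hs : ‖s‖ = 1) (ht : ‖t‖ = 1)
    (htop : {i : Fin d | ρ ≤ |s i|} = {i : Fin d | ρ ≤ |t i|})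
    (hdet : ∀ α β : Fin d, ρ ≤ |s α| → ρ ≤ |s β| →
      |s α * t β - s β * t α| < ν) :
    min ‖t + s‖ ‖t - s‖ ≤ Real.sqrt (2 * ν / ρ ^ 2 + 4 * d * ρ ^ 2) :=
  stmt13_general d ρ ν hρ hν s t hs ht htop hdet
end

section
/- Let D be a d×J real matrix with all entries in {−1,0,1} that contains a d×d identity submatrix (i.e., some d of its columns are the standard unit vectors e_1,…,e_d). If D is not totally unimodular, then D contains d+2 columns x̂_1,…,x̂_{d−2}, p̂_1, p̂_2, p̂_3, p̂_4 such that for all six choices of two vectors p̂_α, p̂_β (1 ≤ α < β ≤ 4), the determinant of the d×d matrix with columns x̂_1,…,x̂_{d−2}, p̂_α, p̂_β is nonzero. -/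
/-!
Let `C = D[f, h]` be a square submatrix of `D` that is minimal among those whose determinant is
not in `{-1, 0, 1}`. Then `C` has size at least `2`, `|det C| ≥ 2` since `det C` is an integer,
and by minimality every entry of `adj C` (a cofactor of `C`) lies in `{-1, 0, 1}`.

As `adj C` is invertible, its columns `0, 1` have a nonzero `2 × 2` minor, in rows `j₁, j₂` say.
By Jacobi's identity this minor is `det C · det Q`, where `Q` is `C` with columns `j₁, j₂` replaced
by the unit vectors `e₀, e₁`. Since `Q` is again a submatrix of `D`, the minor has absolute value
at least `2`, which forces its four entries to be nonzero. So every `2 × 2` minor of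
`[det C · I | adj C]` in rows `j₁, j₂` is nonzero; by Cramer's rule these are, up to the factor
`det C`, the determinants of the six matrices obtained from `C` by putting two of the columns
`h j₁, h j₂, e_{f 0}, e_{f 1}` of `D` in positions `j₁, j₂`. Adjoining the unit columns of `D` for
the rows outside `f` makes each of them a nonsingular `d × d` matrix, and these six share `d - 2`
columns.
-/

open Set Function

theorem Finset.exists_fin_range_superset {α : Type*} [Nonempty α] (T : Finset α) {n : ℕ}
    (hT : T.card ≤ n) : ∃ x : Fin n → α, ↑T ⊆ Set.range x := by
  refine ⟨fun i => T.toList.getD i (Classical.arbitrary α), fun t ht => ?_⟩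
  obtain ⟨i, hi, rfl⟩ := List.getElem_of_mem (Finset.mem_toList.mpr ht)
  refine ⟨⟨i, by simp only [Finset.length_toList] at hi; omega⟩, ?_⟩
  simp [List.getElem?_eq_getElem hi]

theorem exists_fin_sub_two_range_superset {κ α : Type*} [Fintype κ] {d : ℕ}
    {f : κ → Fin d} (hf : f.Injective) (h : κ → α) (g : Fin d → α) {j₁ j₂ : κ} (hj : j₁ ≠ j₂) :
    ∃ x : Fin (d - 2) → α, h '' {j₁, j₂}ᶜ ∪ g '' (range f)ᶜ ⊆ range x := by
  classical
  have : Nonempty α := ⟨h j₁⟩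
  have hκ : 2 ≤ Fintype.card κ := by
    simpa [Finset.card_pair hj] using Finset.card_le_univ {j₁, j₂}
  have hd := Fintype.card_le_of_injective f hf
  set T := ({j₁, j₂}ᶜ : Finset κ).image h ∪ (Finset.univ.image f)ᶜ.image g
  have hT : T.card ≤ d - 2 := by
    refine (Finset.card_union_le _ _).trans ?_
    grw [Finset.card_image_le, Finset.card_image_le, Finset.card_compl, Finset.card_compl,
      Finset.card_pair hj, Finset.card_image_of_injective _ hf]
    simp only [Finset.card_univ, Fintype.card_fin] at hd ⊢
    omega
  obtain ⟨x, hx⟩ := T.exists_fin_range_superset hT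
  refine ⟨x, subset_trans ?_ hx⟩
  rintro _ (⟨c, hc, rfl⟩ | ⟨r, hr, rfl⟩)
  · exact Finset.mem_union_left _ (Finset.mem_image_of_mem h (by simpa using hc))
  · exact Finset.mem_union_right _ (Finset.mem_image_of_mem g (by simpa using hr))

theorem range_update_update_subset {κ α : Type*} [DecidableEq κ] (h : κ → α) (j₁ j₂ : κ)
    (x y : α) : range (update (update h j₁ x) j₂ y) ⊆ h '' {j₁, j₂}ᶜ ∪ {x, y} := by
  rintro _ ⟨c, rfl⟩
  by_cases hc₂ : c = j₂
  · simp [hc₂]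
  by_cases hc₁ : c = j₁
  · subst hc₁
    simp [hc₂]
  · exact Or.inl ⟨c, by simp [hc₁, hc₂], by simp [hc₁, hc₂]⟩

theorem range_subset_range_dite {α : Type*} {n : ℕ} (hn : 2 ≤ n) (x : Fin (n - 2) → α)
    (p q : α) : range x ∪ {p, q} ⊆ range fun c : Fin n =>
      if h : (c : ℕ) < n - 2 then x ⟨c, h⟩ else if (c : ℕ) = n - 2 then p else q := by
  rintro _ (⟨c, rfl⟩ | rfl | rfl)
  · exact ⟨⟨c, by omega⟩, by simp⟩
  · exact ⟨⟨n - 2, by omega⟩, by simp⟩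
  · refine ⟨⟨n - 1, by omega⟩, ?_⟩
    simp [show ¬n - 1 < n - 2 by omega, show n - 1 ≠ n - 2 by omega]

section OrderedRing

variable {K : Type*} [Ring K] [LinearOrder K] [IsStrictOrderedRing K]

theorem one_le_abs_of_mem_range_intCast {x : K} (hx : x ∈ range (Int.cast : ℤ → K))
    (h0 : x ≠ 0) : 1 ≤ |x| := by
  obtain ⟨z, rfl⟩ := hx
  exact_mod_cast Int.one_le_abs (by exact_mod_cast h0)

theorem two_le_abs_of_mem_range_intCast {x : K} (hx : x ∈ range (Int.cast : ℤ → K))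
    (h : x ∉ range (SignType.cast : SignType → K)) : 2 ≤ |x| := by
  obtain ⟨z, rfl⟩ := hx
  have : z ≠ -1 ∧ z ≠ 0 ∧ z ≠ 1 := by
    refine ⟨?_, ?_, ?_⟩ <;> rintro rfl
    exacts [h ⟨-1, by simp⟩, h ⟨0, by simp⟩, h ⟨1, by simp⟩]
  have : 2 ≤ |z| := by rw [le_abs]; omega
  exact_mod_cast this

theorem abs_le_one_of_mem_range_signTypeCast {x : K}
    (hx : x ∈ range (SignType.cast : SignType → K)) : |x| ≤ 1 := by
  obtain ⟨s, rfl⟩ := hx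
  cases s <;> simp

theorem ne_zero_of_two_le_abs_mul_sub_mul {a b c d : K} (ha : |a| ≤ 1) (hb : |b| ≤ 1)
    (hc : |c| ≤ 1) (hd : |d| ≤ 1) (h : 2 ≤ |a * b - c * d|) :
    a ≠ 0 ∧ b ≠ 0 ∧ c ≠ 0 ∧ d ≠ 0 := by
  have hab : |a| * |b| ≤ 1 := mul_le_one₀ ha (abs_nonneg _) hb
  have hcd : |c| * |d| ≤ 1 := mul_le_one₀ hc (abs_nonneg _) hd
  refine ⟨?_, ?_, ?_, ?_⟩ <;> rintro rfl <;> simp only [zero_mul, mul_zero, zero_sub, sub_zero,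
    abs_neg, abs_mul] at h
  exacts [(one_lt_two.trans_le h).not_ge hcd, (one_lt_two.trans_le h).not_ge hcd,
    (one_lt_two.trans_le h).not_ge hab, (one_lt_two.trans_le h).not_ge hab]

end OrderedRing

namespace Matrix

section CommRing

variable {n R : Type*} [Fintype n] [DecidableEq n] [CommRing R]

theorem det_one_updateCol (j : n) (x : n → R) : ((1 : Matrix n n R).updateCol j x).det = x j := by
  rw [← cramer_apply, cramer_one, Module.End.one_apply]

theorem det_one_updateCol_updateCol {j₁ j₂ : n} (hj : j₁ ≠ j₂) (x y : n → R) :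
    (((1 : Matrix n n R).updateCol j₁ x).updateCol j₂ y).det = x j₁ * y j₂ - x j₂ * y j₁ := by
  set A := (1 : Matrix n n R).updateCol j₁ x
  set c := update y j₁ 0
  -- `c` is supported away from `j₁`, where the columns of `A` are unit vectors
  have hc : (fun k => ∑ i, c i • A k i) = c := by
    ext k
    rw [Finset.sum_eq_single k]
    · rcases eq_or_ne k j₁ with rfl | hk
      · simp [c]
      · simp [A, hk]
    · intro i _ hik
      rcases eq_or_ne i j₁ with rfl | hi
      · simp [c]
      · simp [A, hi, hik.symm]
    · simp
  have hy : y = c + y j₁ • Pi.single j₁ 1 := by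
    ext k
    rcases eq_or_ne k j₁ with rfl | hk
    · simp [c]
    · simp [c, hk]
  have hswap : A.updateCol j₂ (Pi.single j₁ 1) =
      ((1 : Matrix n n R).updateCol j₂ x).submatrix id (Equiv.swap j₁ j₂) := by
    ext k c
    rcases eq_or_ne c j₁ with rfl | hc₁
    · simp [A, hj]
    rcases eq_or_ne c j₂ with rfl | hc₂
    · simp [A, hj, Pi.single_apply, one_apply]
    · simp [A, hc₁, hc₂, Equiv.swap_apply_of_ne_of_ne]
  calc (A.updateCol j₂ y).det
      = (A.updateCol j₂ fun k => ∑ i, c i • A k i).det +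
          y j₁ * (A.updateCol j₂ (Pi.single j₁ 1)).det := by
        rw [← det_updateCol_smul, ← det_updateCol_add, hc, ← hy]
    _ = x j₁ * y j₂ - x j₂ * y j₁ := by
        rw [det_updateCol_sum, hswap, det_permute', Equiv.Perm.sign_swap hj, det_one_updateCol,
          det_one_updateCol]
        simp only [c, update_of_ne hj.symm, smul_eq_mul, Units.val_neg, Units.val_one,
          Int.cast_neg, Int.cast_one]
        ring

theorem cramer_mulVec (C : Matrix n n R) (x : n → R) : C.cramer (C *ᵥ x) = C.det • x := by
  rw [cramer_eq_adjugate_mulVec, mulVec_mulVec, adjugate_mul, smul_mulVec, one_mulVec]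

theorem det_mem_range_intCast {A : Matrix n n R}
    (hA : ∀ i j, A i j ∈ range (Int.cast : ℤ → R)) : A.det ∈ range (Int.cast : ℤ → R) := by
  choose Z hZ using hA
  refine ⟨(of Z).det, ?_⟩
  rw [← eq_intCast (Int.castRingHom R), RingHom.map_det]
  congr
  ext i j
  exact hZ i j

theorem det_ne_zero_of_span_col_eq_top [Nontrivial R] {A : Matrix n n R}
    (h : Submodule.span R (range A.col) = ⊤) : A.det ≠ 0 := by
  rw [← range_mulVecLin, LinearMap.range_eq_top] at h
  exact ((isUnit_iff_isUnit_det A).mp (mulVec_surjective_iff_isUnit.mp h)).ne_zero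

end CommRing

theorem submatrix_update_right {ι κ m α : Type*} [DecidableEq κ] (D : Matrix ι m α)
    (f : κ → ι) (τ : κ → m) (j : κ) (w : m) :
    D.submatrix f (update τ j w) = (D.submatrix f τ).updateCol j fun i => D (f i) w := by
  ext i c
  rcases eq_or_ne c j with rfl | hc
  · simp
  · simp [hc]

theorem exists_submatrix_det_notMem_adjugate_mem {ι m R : Type*} [CommRing R] {A : Matrix ι m R}
    (hA : ∀ i j, A i j ∈ range (SignType.cast : SignType → R)) (hnot : ¬ A.IsTotallyUnimodular) :
    ∃ (k : ℕ) (f : Fin (k + 2) → ι) (g : Fin (k + 2) → m), f.Injective ∧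
      (A.submatrix f g).det ∉ range SignType.cast ∧
      ∀ i j, (A.submatrix f g).adjugate i j ∈ range SignType.cast := by
  classical
  have hex : ∃ k, ∃ (f : Fin k → ι) (g : Fin k → m), f.Injective ∧ g.Injective ∧
      (A.submatrix f g).det ∉ range SignType.cast := by
    simpa [IsTotallyUnimodular] using hnot
  obtain ⟨k, ⟨f, g, hf, hg, hdet⟩, hmin⟩ : ∃ k, (∃ (f : Fin k → ι) (g : Fin k → m),
      f.Injective ∧ g.Injective ∧ (A.submatrix f g).det ∉ range SignType.cast) ∧
      ∀ k' < k, ∀ (f : Fin k' → ι) (g : Fin k' → m), f.Injective → g.Injective →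
        (A.submatrix f g).det ∈ range SignType.cast := by
    refine ⟨Nat.find hex, Nat.find_spec hex, fun k' hk' f g hf hg => ?_⟩
    by_contra h
    exact Nat.find_min hex hk' ⟨f, g, hf, hg, h⟩
  rcases k with _ | _ | k
  · exact absurd ⟨1, by simp⟩ hdet
  · exact absurd (by simpa using hA (f 0) (g 0)) hdet
  refine ⟨k, f, g, hf, hdet, fun i j => ?_⟩
  obtain ⟨s, hs⟩ := hmin (k + 1) (by omega) _ _ (hf.comp (Fin.succAbove_right_injective (p := j)))
    (hg.comp (Fin.succAbove_right_injective (p := i)))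
  rw [adjugate_fin_succ_eq_det_submatrix, submatrix_submatrix]
  rcases neg_one_pow_eq_or R (j + i : ℕ) with h | h
  · exact ⟨s, by simp [h, hs]⟩
  · exact ⟨-s, by simp [h, hs]⟩

section Field

variable {n K : Type*} [Fintype n] [DecidableEq n] [Field K]

theorem det_mul_det_updateCol_updateCol {C : Matrix n n K} (hC : C.det ≠ 0) {j₁ j₂ : n}
    (hj : j₁ ≠ j₂) (b₁ b₂ : n → K) :
    C.det * ((C.updateCol j₁ b₁).updateCol j₂ b₂).det =
      C.cramer b₁ j₁ * C.cramer b₂ j₂ - C.cramer b₁ j₂ * C.cramer b₂ j₁ := by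
  have hb : ∀ b : n → K, C *ᵥ (C⁻¹ *ᵥ b) = b := fun b => by
    rw [mulVec_mulVec, mul_nonsing_inv _ hC.isUnit, one_mulVec]
  set x := C⁻¹ *ᵥ b₁
  set y := C⁻¹ *ᵥ b₂
  have hQ : (C.updateCol j₁ (C *ᵥ x)).updateCol j₂ (C *ᵥ y) =
      C * ((1 : Matrix n n K).updateCol j₁ x).updateCol j₂ y := by
    rw [mul_updateCol, mul_updateCol, mul_one]
  rw [← hb b₁, ← hb b₂, cramer_mulVec, cramer_mulVec, hQ, det_mul, det_one_updateCol_updateCol hj]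
  simp only [Pi.smul_apply, smul_eq_mul]
  ring

theorem exists_mul_sub_mul_ne_zero {A : Matrix n n K} (hA : A.det ≠ 0) {a₁ a₂ : n}
    (ha : a₁ ≠ a₂) : ∃ j₁ j₂, A j₁ a₁ * A j₂ a₂ - A j₂ a₁ * A j₁ a₂ ≠ 0 := by
  have hli := linearIndependent_cols_of_isUnit ((isUnit_iff_isUnit_det A).mpr hA.isUnit)
  obtain ⟨j₁, hj₁⟩ : ∃ j, A j a₁ ≠ 0 := Function.ne_iff.mp (hli.ne_zero a₁)
  by_contra! h
  refine hj₁ (neg_eq_zero.mp ((LinearIndepOn.pair_iff _ ha).mp (hli.linearIndepOn _)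
    (A j₁ a₂) (-A j₁ a₁) ?_).2)
  ext j
  simp only [Pi.add_apply, Pi.smul_apply, smul_eq_mul, col_apply, Pi.zero_apply]
  linear_combination -h j₁ j

theorem span_range_union_image_single_eq_top {κ : Type*} [Fintype κ] [DecidableEq κ] {f : κ → n}
    (v : κ → n → K) (hv : (of fun i j => v j (f i)).det ≠ 0) :
    Submodule.span K (range v ∪ (fun r => Pi.single r 1) '' (range f)ᶜ) = ⊤ := by
  set S := Submodule.span K (range v ∪ (fun r => Pi.single r (1 : K)) '' (range f)ᶜ)
  refine eq_top_iff.mpr fun w _ => ?_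
  set c := (of fun i j => v j (f i))⁻¹ *ᵥ (w ∘ f)
  have hAc : (of fun i j => v j (f i)) *ᵥ c = w ∘ f := by
    rw [mulVec_mulVec, mul_nonsing_inv _ hv.isUnit, one_mulVec]
  have hc : ∀ i, ∑ j, c j * v j (f i) = w (f i) := fun i => by
    simpa [mulVec, dotProduct, mul_comm] using congrFun hAc i
  set u := w - ∑ j, c j • v j
  have hu : ∀ r, u r ≠ 0 → r ∉ range f := by
    rintro r hr ⟨i, rfl⟩
    simp [u, hc] at hr
  have huS : u ∈ S := by
    rw [← Finset.univ_sum_single u]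
    refine Submodule.sum_mem _ fun r _ => ?_
    by_cases hr : u r = 0
    · simp [hr]
    · rw [show Pi.single r (u r) = u r • Pi.single r (1 : K) by simp [← Pi.single_smul']]
      exact Submodule.smul_mem _ _ (Submodule.subset_span (Or.inr ⟨r, hu r hr, rfl⟩))
  have hw : w = ∑ j, c j • v j + u := by simp [u]
  rw [hw]
  exact add_mem (Submodule.sum_mem _ fun j _ =>
    Submodule.smul_mem _ _ (Submodule.subset_span (Or.inl ⟨j, rfl⟩))) huS

theorem det_submatrix_ne_zero_of_range_subset {κ m : Type*} [Fintype κ] [DecidableEq κ]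
    {D : Matrix n m K} {g : n → m} (hg : ∀ i r, D r (g i) = if r = i then 1 else 0)
    {f : κ → n} {τ : κ → m} (hτ : (D.submatrix f τ).det ≠ 0) {σ : n → m}
    (hσ : range τ ∪ g '' (range f)ᶜ ⊆ range σ) : (D.submatrix id σ).det ≠ 0 := by
  refine det_ne_zero_of_span_col_eq_top (eq_top_iff.mpr ?_)
  refine (span_range_union_image_single_eq_top (fun j => D.col (τ j)) hτ).ge.trans
    (Submodule.span_mono ?_)
  rintro _ (⟨j, rfl⟩ | ⟨r, hr, rfl⟩)
  · obtain ⟨c, hc⟩ := hσ (Or.inl ⟨j, rfl⟩)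
    exact ⟨c, by ext; simp [hc]⟩
  · obtain ⟨c, hc⟩ := hσ (Or.inr ⟨r, hr, rfl⟩)
    exact ⟨c, by ext; simp [hc, hg, Pi.single_apply]⟩

theorem exists_adjugate_ne_zero_and_mul_sub_mul_ne_zero [LinearOrder K] [IsStrictOrderedRing K]
    {C : Matrix n n K} (hC : ∀ i j, C i j ∈ range (Int.cast : ℤ → K))
    (hdet : C.det ∉ range SignType.cast)
    (hadj : ∀ i j, C.adjugate i j ∈ range SignType.cast) {a₁ a₂ : n} (ha : a₁ ≠ a₂) :
    ∃ j₁ j₂, j₁ ≠ j₂ ∧ C.adjugate j₁ a₁ ≠ 0 ∧ C.adjugate j₂ a₂ ≠ 0 ∧ C.adjugate j₂ a₁ ≠ 0 ∧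
      C.adjugate j₁ a₂ ≠ 0 ∧
      C.adjugate j₁ a₁ * C.adjugate j₂ a₂ - C.adjugate j₂ a₁ * C.adjugate j₁ a₂ ≠ 0 := by
  have hCdet : 2 ≤ |C.det| := two_le_abs_of_mem_range_intCast (det_mem_range_intCast hC) hdet
  have hC0 : C.det ≠ 0 := fun h0 => by norm_num [h0] at hCdet
  obtain ⟨j₁, j₂, hminor⟩ := exists_mul_sub_mul_ne_zero
    (by rw [det_adjugate]; exact pow_ne_zero _ hC0) ha (A := C.adjugate)
  have hj : j₁ ≠ j₂ := by
    rintro rfl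
    exact hminor (sub_self _)
  set Q := (C.updateCol j₁ (Pi.single a₁ 1)).updateCol j₂ (Pi.single a₂ 1)
  have hJacobi : C.det * Q.det =
      C.adjugate j₁ a₁ * C.adjugate j₂ a₂ - C.adjugate j₂ a₁ * C.adjugate j₁ a₂ := by
    simp [Q, det_mul_det_updateCol_updateCol hC0 hj, cramer_eq_adjugate_mulVec]
  have hQ : 1 ≤ |Q.det| := by
    refine one_le_abs_of_mem_range_intCast (det_mem_range_intCast fun i j => ?_) fun h0 => ?_
    · simp only [Q, updateCol_apply, Pi.single_apply]
      split_ifs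
      exacts [⟨1, Int.cast_one⟩, ⟨0, Int.cast_zero⟩, ⟨1, Int.cast_one⟩, ⟨0, Int.cast_zero⟩, hC i j]
    · exact hminor (by rw [← hJacobi, h0, mul_zero])
  have h2 : 2 ≤ |C.adjugate j₁ a₁ * C.adjugate j₂ a₂ - C.adjugate j₂ a₁ * C.adjugate j₁ a₂| := by
    rw [← hJacobi, abs_mul]
    nlinarith
  have hbound := fun i j => abs_le_one_of_mem_range_signTypeCast (hadj i j)
  obtain ⟨h₁, h₂, h₃, h₄⟩ :=
    ne_zero_of_two_le_abs_mul_sub_mul (hbound _ _) (hbound _ _) (hbound _ _) (hbound _ _) h2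
  exact ⟨j₁, j₂, hj, h₁, h₂, h₃, h₄, hminor⟩

theorem det_submatrix_update_update_ne_zero {ι m : Type*} [DecidableEq ι]
    {D : Matrix ι m K} {g : ι → m} (hg : ∀ i r, D r (g i) = if r = i then 1 else 0)
    {f : n → ι} (hf : f.Injective) {h : n → m} (hC : (D.submatrix f h).det ≠ 0)
    {j₁ j₂ a₁ a₂ : n} (hj : j₁ ≠ j₂)
    (h₁₁ : (D.submatrix f h).adjugate j₁ a₁ ≠ 0) (h₂₂ : (D.submatrix f h).adjugate j₂ a₂ ≠ 0)
    (h₂₁ : (D.submatrix f h).adjugate j₂ a₁ ≠ 0) (h₁₂ : (D.submatrix f h).adjugate j₁ a₂ ≠ 0)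
    (hminor : (D.submatrix f h).adjugate j₁ a₁ * (D.submatrix f h).adjugate j₂ a₂ -
      (D.submatrix f h).adjugate j₂ a₁ * (D.submatrix f h).adjugate j₁ a₂ ≠ 0)
    {α β : Fin 4} (hαβ : α ≠ β) :
    (D.submatrix f (update (update h j₁ (![h j₁, h j₂, g (f a₁), g (f a₂)] α)) j₂
      (![h j₁, h j₂, g (f a₁), g (f a₂)] β))).det ≠ 0 := by
  set C := D.submatrix f h
  have hunit : ∀ a, (fun i => D (f i) (g (f a))) = Pi.single a 1 := fun a => by
    ext i
    simp [hg, hf.eq_iff, Pi.single_apply]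
  have hcramer : ∀ γ : Fin 4, C.cramer (fun i => D (f i) (![h j₁, h j₂, g (f a₁), g (f a₂)] γ)) =
      ![Pi.single j₁ C.det, Pi.single j₂ C.det, C.adjugate.col a₁, C.adjugate.col a₂] γ := by
    intro γ
    fin_cases γ
    · exact cramer_row_self _ _ _ fun _ => rfl
    · exact cramer_row_self _ _ _ fun _ => rfl
    · show C.cramer (fun i => D (f i) (g (f a₁))) = C.adjugate.col a₁
      rw [hunit, cramer_eq_adjugate_mulVec, mulVec_single_one]
    · show C.cramer (fun i => D (f i) (g (f a₂))) = C.adjugate.col a₂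
      rw [hunit, cramer_eq_adjugate_mulVec, mulVec_single_one]
  have hminor' : C.adjugate j₁ a₂ * C.adjugate j₂ a₁ - C.adjugate j₂ a₂ * C.adjugate j₁ a₁ ≠ 0 :=
    fun h0 => hminor (by linear_combination -h0)
  refine right_ne_zero_of_mul (a := C.det) ?_
  rw [submatrix_update_right, submatrix_update_right, det_mul_det_updateCol_updateCol hC hj,
    hcramer, hcramer]
  fin_cases α <;> fin_cases β <;>
    first
    | exact absurd rfl hαβ
    | simp [hj, hj.symm, hC, h₁₁, h₂₂, h₂₁, h₁₂, hminor, hminor']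

end Field

end Matrix

open Matrix

theorem stmt14 (d J : ℕ) (D : Matrix (Fin d) (Fin J) ℝ)
    (hentries : ∀ i j, D i j = -1 ∨ D i j = 0 ∨ D i j = 1)
    (hid : ∃ g : Fin d → Fin J, Function.Injective g ∧
      ∀ i r, D r (g i) = if r = i then 1 else 0)
    (hnotTU : ¬ D.IsTotallyUnimodular) :
    ∃ (xhat : Fin (d - 2) → Fin J) (phat : Fin 4 → Fin J),
      ∀ α β : Fin 4, α ≠ β →
        (Matrix.of fun r c : Fin d =>
          D r (if h : (c : ℕ) < d - 2 then xhat ⟨c, h⟩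
               else if (c : ℕ) = d - 2 then phat α else phat β)).det ≠ 0 := by
  obtain ⟨g, -, hg⟩ := hid
  have hsign : ∀ i j, D i j ∈ range (SignType.cast : SignType → ℝ) := fun i j => by
    rcases hentries i j with h | h | h <;> rw [h]
    exacts [⟨-1, by simp⟩, ⟨0, by simp⟩, ⟨1, by simp⟩]
  obtain ⟨m, f, h, hf, hdet, hadj⟩ := exists_submatrix_det_notMem_adjugate_mem hsign hnotTU
  obtain ⟨j₁, j₂, hj, h₁₁, h₂₂, h₂₁, h₁₂, hminor⟩ :=
    exists_adjugate_ne_zero_and_mul_sub_mul_ne_zero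
      (fun i j => by obtain ⟨s, hs⟩ := hsign (f i) (h j); exact ⟨s, by simp [← hs]⟩)
      hdet hadj (a₁ := 0) (a₂ := 1) zero_ne_one
  have hd : m + 2 ≤ d := by simpa using Fintype.card_le_of_injective f hf
  obtain ⟨xhat, hxhat⟩ := exists_fin_sub_two_range_superset hf h g hj
  refine ⟨xhat, ![h j₁, h j₂, g (f 0), g (f 1)], fun α β hαβ => ?_⟩
  refine det_submatrix_ne_zero_of_range_subset hg
    (det_submatrix_update_update_ne_zero hg hf (fun h0 => hdet ⟨0, by simp [h0]⟩) hj h₁₁ h₂₂ h₂₁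
      h₁₂ hminor hαβ)
    (subset_trans ?_ (range_subset_range_dite (by omega) xhat _ _))
  rintro t (ht | ht)
  · exact (range_update_update_subset _ _ _ _ _ ht).imp_left fun ht => hxhat (Or.inl ht)
  · exact Or.inl (hxhat (Or.inr ht))
end

section
/- Let d ≥ 2, let A be an m×d real matrix with rows a_1,…,a_m ∈ ℝ^d, and let γ_1,…,γ_{d−2}, κ_1, κ_2, κ_3, κ_4 ∈ {1,…,m} be row indices. For α, β ∈ {1,2,3,4} let t_{α,β} be the determinant of the d×d matrix whose rows are a_{γ_1},…,a_{γ_{d−2}}, a_{κ_α}, a_{κ_β}, in this order. Then t_{1,2}·t_{3,4} − t_{1,4}·t_{3,2} + t_{2,4}·t_{3,1} = 0. -/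
/-!
Put `w = (a_{γ_1}, …, a_{γ_{d-2}}, a_{κ_1}, a_{κ_2}, a_{κ_4})`, a family of `d + 1` vectors in `ℝ^d`.
Expanding along its first column a determinant with two equal columns gives the linear dependency
`∑ j, (-1)^j det(w without w_j) • w_j = 0`. Applying the linear functional
`x ↦ det(a_{γ_1}, …, a_{γ_{d-2}}, a_{κ_3}, x)` kills the terms `w_j = a_{γ_i}` (repeated row), and
the three remaining terms are the relation, multiplied by `(-1)^(d-2)`.
-/

/-- The `d×d` matrix whose rows are the rows of `A` indexed (in order) by
`γ 0, …, γ (d-3), u, v`. -/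
def rowSel {m d : ℕ} (A : Matrix (Fin m) (Fin d) ℝ) (γ : Fin (d - 2) → Fin m)
    (u v : Fin m) : Matrix (Fin d) (Fin d) ℝ :=
  A.submatrix
    (fun r : Fin d =>
      if h : (r : ℕ) < d - 2 then γ ⟨r, h⟩ else if (r : ℕ) = d - 2 then u else v)
    id

theorem Fin.snoc_comp_castSucc_succAbove {n : ℕ} {α : Type*} (f : Fin (n + 1) → α) (x : α)
    (i : Fin (n + 1)) :
    (Fin.snoc f x : Fin (n + 2) → α) ∘ i.castSucc.succAbove = Fin.snoc (f ∘ i.succAbove) x := by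
  funext r
  induction r using Fin.lastCases with
  | last => simp [Fin.succAbove_castSucc_of_le _ _ (Fin.le_last i)]
  | cast r => simp [Fin.castSucc_succAbove_castSucc]

theorem Matrix.sum_neg_one_pow_mul_det_succAbove_smul_eq_zero {R : Type*} [CommRing R] {d : ℕ}
    (w : Fin (d + 1) → Fin d → R) :
    ∑ j : Fin (d + 1), ((-1) ^ (j : ℕ) * (Matrix.of (w ∘ j.succAbove)).det) • w j = 0 := by
  funext k
  let N : Matrix (Fin (d + 1)) (Fin (d + 1)) R := .of fun p => Fin.cons (w p k) (w p)
  have hN : N.det = 0 := Matrix.det_zero_of_column_eq (Fin.succ_ne_zero k).symm fun p => rfl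
  rw [Matrix.det_succ_column_zero] at hN
  simpa [N, Matrix.submatrix, mul_comm, mul_left_comm, mul_assoc, Function.comp_def] using hN

section detSnoc

variable {R : Type*} [CommRing R] {n : ℕ} (B : Fin n → Fin (n + 2) → R)

def detSnoc (x y : Fin (n + 2) → R) : R :=
  (Matrix.of (Fin.snoc (Fin.snoc B x) y)).det

theorem exists_linearMap_eq_detSnoc (x : Fin (n + 2) → R) :
    ∃ L : (Fin (n + 2) → R) →ₗ[R] R, ∀ y, L y = detSnoc B x y :=
  ⟨Matrix.detRowAlternating.toMultilinearMap.toLinearMap (Fin.snoc (Fin.snoc B x) 0)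
      (Fin.last _), fun y => by
    simp only [MultilinearMap.toLinearMap_apply, Fin.update_snoc_last]; rfl⟩

theorem detSnoc_row_eq_zero (x : Fin (n + 2) → R) (i : Fin n) : detSnoc B x (B i) = 0 := by
  rw [detSnoc]
  exact Matrix.det_zero_of_row_eq (Fin.castSucc_lt_last (Fin.castSucc i)).ne
    (funext fun k => by simp only [Matrix.of_apply, Fin.snoc_castSucc, Fin.snoc_last])

theorem detSnoc_plucker_relation (a b c e : Fin (n + 2) → R) :
    detSnoc B a b * detSnoc B c e - detSnoc B a e * detSnoc B c b +
      detSnoc B b e * detSnoc B c a = 0 := by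
  obtain ⟨L, hL⟩ := exists_linearMap_eq_detSnoc B c
  have h := congrArg L (Matrix.sum_neg_one_pow_mul_det_succAbove_smul_eq_zero
    (Fin.snoc (Fin.snoc (Fin.snoc B a) b) e))
  rw [map_sum, map_zero] at h
  simp only [map_smul, smul_eq_mul] at h
  simp only [Fin.sum_univ_castSucc, Fin.snoc_castSucc, Fin.snoc_last, hL, detSnoc_row_eq_zero,
    mul_zero, Finset.sum_const_zero, zero_add, Fin.snoc_comp_castSucc_succAbove,
    Fin.succAbove_last, Fin.snoc_comp_castSucc, Fin.val_last, Fin.val_castSucc] at h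
  unfold detSnoc at *
  rw [← ((isUnit_neg_one (α := R)).pow n).mul_right_eq_zero]
  linear_combination h

end detSnoc

theorem det_rowSel_eq_detSnoc {m n : ℕ} (A : Matrix (Fin m) (Fin (n + 2)) ℝ)
    (γ : Fin (n + 2 - 2) → Fin m) (u v : Fin m) :
    (rowSel A γ u v).det = detSnoc (A ∘ γ) (A u) (A v) := by
  congr 1
  ext r k
  induction r using Fin.lastCases with
  | last => simp [rowSel]
  | cast r =>
    induction r using Fin.lastCases with
    | last => simp [rowSel]
    | cast r => simp [rowSel]; rfl

/-- The Plücker (Grassmann) relation among `d×d` minors of an `m×d` matrix. -/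
theorem stmt15 (m d : ℕ) (hd : 2 ≤ d) (A : Matrix (Fin m) (Fin d) ℝ)
    (γ : Fin (d - 2) → Fin m) (κ : Fin 4 → Fin m) :
    (rowSel A γ (κ 0) (κ 1)).det * (rowSel A γ (κ 2) (κ 3)).det -
      (rowSel A γ (κ 0) (κ 3)).det * (rowSel A γ (κ 2) (κ 1)).det +
      (rowSel A γ (κ 1) (κ 3)).det * (rowSel A γ (κ 2) (κ 0)).det = 0 := by
  obtain ⟨n, rfl⟩ : ∃ n, d = n + 2 := ⟨d - 2, by omega⟩
  simp only [det_rowSel_eq_detSnoc]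
  exact detSnoc_plucker_relation _ _ _ _ _
end

section
/- Let a, b, c, e, f, g be real numbers, each of absolute value at most 1, satisfying a·b − c·e + f·g = 0. Then min{|a|, |b|, |c|, |e|, |f|, |g|} ≤ 1/√2. -/
/-!
If every entry exceeded `1/√2` in absolute value, each of the products `ab`, `ce`, `fg` would have
absolute value in `(1/2, 1]`. But `ce = ab + fg`: if `ab` and `fg` have the same sign then
`|ce| > 1`, and otherwise `|ce| < 1/2`.
-/

lemma abs_add_lt_or_two_mul_lt_abs_add {t x z : ℝ} (hx : t < |x|) (hx' : |x| ≤ 2 * t)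
    (hz : t < |z|) (hz' : |z| ≤ 2 * t) : |x + z| < t ∨ 2 * t < |x + z| := by
  rcases abs_cases x with ⟨_, _⟩ | ⟨_, _⟩ <;>
  rcases abs_cases z with ⟨_, _⟩ | ⟨_, _⟩ <;>
  rcases abs_cases (x + z) with ⟨_, _⟩ | ⟨_, _⟩ <;>
  first | (left; linarith) | (right; linarith)

lemma half_lt_abs_mul {u v : ℝ} (hu : 1 / √2 < |u|) (hv : 1 / √2 < |v|) : 1 / 2 < |u * v| :=
  calc 1 / 2 = 1 / √2 * (1 / √2) := by
        rw [one_div_mul_one_div, Real.mul_self_sqrt zero_le_two]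
    _ < |u| * |v| := mul_lt_mul'' hu hv (by positivity) (by positivity)
    _ = |u * v| := (abs_mul u v).symm

lemma abs_mul_le_one {u v : ℝ} (hu : |u| ≤ 1) (hv : |v| ≤ 1) : |u * v| ≤ 1 := by
  rw [abs_mul]
  exact mul_le_one₀ hu (abs_nonneg v) hv

theorem stmt16 (a b c e f g : ℝ)
    (ha : |a| ≤ 1) (hb : |b| ≤ 1) (hc : |c| ≤ 1)
    (he : |e| ≤ 1) (hf : |f| ≤ 1) (hg : |g| ≤ 1)
    (hrel : a * b - c * e + f * g = 0) :
    min (min (min |a| |b|) (min |c| |e|)) (min |f| |g|) ≤ 1 / Real.sqrt 2 := by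
  by_contra! h
  simp only [lt_min_iff] at h
  obtain ⟨⟨⟨ha', hb'⟩, hc', he'⟩, hf', hg'⟩ := h
  have hce : c * e = a * b + f * g := by linarith
  have key := abs_add_lt_or_two_mul_lt_abs_add (t := 1 / 2)
    (half_lt_abs_mul ha' hb') ((abs_mul_le_one ha hb).trans_eq (by norm_num))
    (half_lt_abs_mul hf' hg') ((abs_mul_le_one hf hg).trans_eq (by norm_num))
  rw [← hce] at key
  have hce_lower := half_lt_abs_mul hc' he'
  have hce_upper := abs_mul_le_one hc he
  rcases key with key | key <;> linarith
end
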